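/- arXiv:2409.05516 — 7 statements merged into one kernel-verified Lean document; each statement's English description precedes it below -/
import Mathlib

section
/- Let X be a real Banach space and ε ∈ (0,2). If x₀* ∈ s_ε B_{X*}, then θ·x₀* ∈ s_ε B_{X*} for every θ ∈ (0,1). -/
open Filter Topology Metric

/-- The ε-Szlenk derivation of the closed dual unit ball of `X`: the set of functionals
`x* ∈ B_{X*}` such that every weak*-open set containing `x*` meets `B_{X*}` in a set of
norm-diameter strictly greater than `ε`. -/
def szlenkDeriv (X : Type*) [NormedAddCommGroup X] [NormedSpace ℝ X] (ε : ℝ) :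
    Set (StrongDual ℝ X) :=
  {x : StrongDual ℝ X | ‖x‖ ≤ 1 ∧
    ∀ V : Set (StrongDual ℝ X),
      IsOpen ((StrongDual.toWeakDual '' V : Set (WeakDual ℝ X))) → x ∈ V →
        ε < Metric.diam (Metric.closedBall (0 : StrongDual ℝ X) 1 ∩ V)}

/-!
Write `θ = α - β` with `α = (1 + θ)/2`, `β = (1 - θ)/2`. By weak*-continuity of
`(u, v) ↦ α u - β v`, a weak*-neighbourhood `V` of `θ x₀` contains `α u - β v` for all `u, v` in
some weak*-neighbourhood `U` of `x₀`. For `a, b ∈ B_{X*} ∩ U` the functionals `α a - β b` and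
`α b - β a` lie in `B_{X*} ∩ V` (since `α + β = 1`) and their difference is `a - b`, so the
diameter of `B_{X*} ∩ V` is at least that of `B_{X*} ∩ U`, which exceeds `ε`.
-/

theorem norm_smul_sub_smul_le_one {E : Type*} [SeminormedAddCommGroup E] [NormedSpace ℝ E]
    {α β : ℝ} (hαβ : |α| + |β| ≤ 1) {u v : E} (hu : ‖u‖ ≤ 1) (hv : ‖v‖ ≤ 1) :
    ‖α • u - β • v‖ ≤ 1 :=
  calc ‖α • u - β • v‖ ≤ |α| * ‖u‖ + |β| * ‖v‖ := by
        simpa only [norm_smul, Real.norm_eq_abs] using norm_sub_le (α • u) (β • v)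
    _ ≤ |α| * 1 + |β| * 1 := by gcongr
    _ ≤ 1 := by linarith

theorem diam_closedBall_inter_le_of_smul_sub_smul_mem {E : Type*} [SeminormedAddCommGroup E]
    [NormedSpace ℝ E] {U V : Set E} {α β : ℝ} (hα : 0 ≤ α) (hβ : 0 ≤ β) (hαβ : α + β = 1)
    (hUV : ∀ u ∈ U, ∀ v ∈ U, α • u - β • v ∈ V) :
    diam (closedBall (0 : E) 1 ∩ U) ≤ diam (closedBall (0 : E) 1 ∩ V) := by
  have hcoeff : |α| + |β| ≤ 1 := by rw [abs_of_nonneg hα, abs_of_nonneg hβ, hαβ]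
  have hmaps : ∀ u ∈ closedBall (0 : E) 1 ∩ U, ∀ v ∈ closedBall (0 : E) 1 ∩ U,
      α • u - β • v ∈ closedBall (0 : E) 1 ∩ V := by
    rintro u ⟨hu, huU⟩ v ⟨hv, hvU⟩
    rw [mem_closedBall_zero_iff] at hu hv
    exact ⟨mem_closedBall_zero_iff.mpr (norm_smul_sub_smul_le_one hcoeff hu hv), hUV u huU v hvU⟩
  refine diam_le_of_forall_dist_le diam_nonneg fun a ha b hb => ?_
  have hdiff : (α • a - β • b) - (α • b - β • a) = a - b := by
    rw [← one_smul ℝ (a - b), ← hαβ]; module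
  calc dist a b = dist (α • a - β • b) (α • b - β • a) := by rw [dist_eq_norm, dist_eq_norm, hdiff]
    _ ≤ diam (closedBall (0 : E) 1 ∩ V) :=
      dist_le_diam_of_mem (isBounded_closedBall.subset Set.inter_subset_left)
        (hmaps a ha b hb) (hmaps b hb a ha)

theorem StrongDual.exists_weakDual_isOpen_smul_sub_smul_mem {𝕜 E : Type*}
    [NontriviallyNormedField 𝕜] [SeminormedAddCommGroup E] [NormedSpace 𝕜 E]
    {V : Set (StrongDual 𝕜 E)} (hV : IsOpen (toWeakDual '' V : Set (WeakDual 𝕜 E)))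
    {x : StrongDual 𝕜 E} (α β : 𝕜) (hx : (α - β) • x ∈ V) :
    ∃ U : Set (StrongDual 𝕜 E), IsOpen (toWeakDual '' U : Set (WeakDual 𝕜 E)) ∧ x ∈ U ∧
      ∀ u ∈ U, ∀ v ∈ U, α • u - β • v ∈ V := by
  let Φ : WeakDual 𝕜 E × WeakDual 𝕜 E → WeakDual 𝕜 E := fun p => α • p.1 - β • p.2
  have hΦ : Continuous Φ := (continuous_fst.const_smul α).sub (continuous_snd.const_smul β)
  have hmem : Φ⁻¹' (toWeakDual '' V) ∈ 𝓝 (toWeakDual x, toWeakDual x) := by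
    refine hΦ.continuousAt.preimage_mem_nhds (hV.mem_nhds ⟨(α - β) • x, hx, ?_⟩)
    simp only [Φ, map_smul, sub_smul]
  rw [nhds_prod_eq, mem_prod_self_iff] at hmem
  obtain ⟨T, hT, hTΦ⟩ := hmem
  obtain ⟨W, hWT, hW, hxW⟩ := mem_nhds_iff.mp hT
  refine ⟨toWeakDual ⁻¹' W, ?_, hxW, fun u hu v hv => ?_⟩
  · rwa [Set.image_preimage_eq _ toWeakDual.surjective]
  · obtain ⟨w, hwV, hw⟩ := hTΦ (Set.mk_mem_prod (hWT hu) (hWT hv))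
    have hw' : toWeakDual w = toWeakDual (α • u - β • v) := by rwa [map_sub, map_smul, map_smul]
    rwa [← (toWeakDual_inj _ _).mp hw']

theorem szlenkDeriv_smul_mem_general (X : Type*) [NormedAddCommGroup X] [NormedSpace ℝ X]
    (ε : ℝ)
    (x₀ : StrongDual ℝ X) (hx₀ : x₀ ∈ szlenkDeriv X ε)
    (θ : ℝ) (hθ : θ ∈ Set.Ioo (0 : ℝ) 1) :
    θ • x₀ ∈ szlenkDeriv X ε := by
  obtain ⟨hx₀_norm, hx₀_diam⟩ := hx₀
  obtain ⟨hθ0, hθ1⟩ := hθ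
  refine ⟨?_, fun V hV hθx₀ => ?_⟩
  · rw [norm_smul, Real.norm_of_nonneg hθ0.le]
    nlinarith [norm_nonneg x₀]
  obtain ⟨U, hU, hx₀U, hUV⟩ := StrongDual.exists_weakDual_isOpen_smul_sub_smul_mem hV
    ((1 + θ) / 2) ((1 - θ) / 2) (by convert hθx₀ using 2; ring)
  calc ε < diam (closedBall 0 1 ∩ U) := hx₀_diam U hU hx₀U
    _ ≤ diam (closedBall 0 1 ∩ V) :=
      diam_closedBall_inter_le_of_smul_sub_smul_mem (by linarith) (by linarith) (by ring) hUV

theorem szlenkDeriv_smul_mem (X : Type*) [NormedAddCommGroup X] [NormedSpace ℝ X]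
    [CompleteSpace X] (ε : ℝ) (hε : ε ∈ Set.Ioo (0 : ℝ) 2)
    (x₀ : StrongDual ℝ X) (hx₀ : x₀ ∈ szlenkDeriv X ε)
    (θ : ℝ) (hθ : θ ∈ Set.Ioo (0 : ℝ) 1) :
    θ • x₀ ∈ szlenkDeriv X ε :=
  szlenkDeriv_smul_mem_general X ε x₀ hx₀ θ hθ
end

section
/- Let X be a separable real Banach space with property (M*) and let ε ∈ (0,2). If x₀* ∈ s_ε B_{X*} and y₀* ∈ X* satisfies ‖y₀*‖ ≤ ‖x₀*‖, then y₀* ∈ s_ε B_{X*}. -/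
/-!
Let `x₀ ∈ s_ε B_{X*}`. Every weak*-neighbourhood of `x₀` contains a point of the ball at distance
more than `ε/2` from `x₀`; as the weak* topology on the ball is metrizable (`X` is separable), this
gives a weak*-null sequence `(wₙ)` with `‖x₀ + wₙ‖ ≤ 1` and `‖wₙ‖ > ε/2`. Property (M*) makes
`limsup ‖x + wₙ‖` depend on `‖x‖` only, and a convexity argument shows it is monotone in `‖x‖`,
so `limsup ‖y₀ ± wₙ‖ ≤ 1`. Given a weak*-open `V ∋ y₀`, pick `α < 1` with `α y₀ ∈ V`; the points
`α y₀ ± ((α + η/‖wₙ‖) wₙ)` with `η = (1 - α) ε / 2` then eventually lie in `B_{X*} ∩ V` and are more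
than `ε` apart.
-/

open Filter Topology Metric

/-- A sequence in the dual is weak*-null if it tends to `0` in the weak* topology. -/
def WeakStarNull {X : Type*} [NormedAddCommGroup X] [NormedSpace ℝ X]
    (u : ℕ → StrongDual ℝ X) : Prop :=
  Filter.Tendsto (fun n => StrongDual.toWeakDual (u n)) Filter.atTop
    (nhds (0 : WeakDual ℝ X))

/-- Kalton's property (M*). -/
def PropMStar (X : Type*) [NormedAddCommGroup X] [NormedSpace ℝ X] : Prop :=
  ∀ x y : StrongDual ℝ X, ‖x‖ = ‖y‖ →
    ∀ u : ℕ → StrongDual ℝ X, WeakStarNull u →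
      Filter.limsup (fun n => ‖x + u n‖) Filter.atTop
        = Filter.limsup (fun n => ‖y + u n‖) Filter.atTop

open Set

theorem exists_seq_tendsto_of_mem_closure_of_subset {Y : Type*} [TopologicalSpace Y]
    {K S : Set Y} [FrechetUrysohnSpace K] (hSK : S ⊆ K) {a : Y} (haK : a ∈ K)
    (ha : a ∈ closure S) : ∃ z : ℕ → Y, (∀ n, z n ∈ S) ∧ Tendsto z atTop (𝓝 a) := by
  have hmem : (⟨a, haK⟩ : K) ∈ closure (Subtype.val ⁻¹' S) := by
    rw [IsInducing.subtypeVal.closure_eq_preimage_closure_image,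
      image_preimage_eq_of_subset (by rwa [Subtype.range_coe])]
    exact ha
  obtain ⟨z, hzS, hz⟩ := mem_closure_iff_seq_limit.1 hmem
  exact ⟨fun n => z n, hzS, (continuous_subtype_val.tendsto _).comp hz⟩

theorem norm_smul_add_le_max {E : Type*} [SeminormedAddCommGroup E] [NormedSpace ℝ E]
    {t : ℝ} (ht : t ∈ Icc (0 : ℝ) 1) (x u : E) : ‖t • x + u‖ ≤ max ‖x + u‖ ‖x - u‖ := by
  obtain ⟨ht0, ht1⟩ := ht
  have hsplit : t • x + u = ((1 + t) / 2) • (x + u) - ((1 - t) / 2) • (x - u) := by module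
  calc ‖t • x + u‖ ≤ (1 + t) / 2 * ‖x + u‖ + (1 - t) / 2 * ‖x - u‖ := by
        rw [hsplit]
        refine (norm_sub_le _ _).trans_eq ?_
        rw [norm_smul, norm_smul, Real.norm_of_nonneg (by linarith),
          Real.norm_of_nonneg (by linarith)]
    _ ≤ (1 + t) / 2 * max ‖x + u‖ ‖x - u‖ + (1 - t) / 2 * max ‖x + u‖ ‖x - u‖ :=
        add_le_add (mul_le_mul_of_nonneg_left (le_max_left _ _) (by linarith))
          (mul_le_mul_of_nonneg_left (le_max_right _ _) (by linarith))
    _ = max ‖x + u‖ ‖x - u‖ := by ring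

theorem exists_smul_mem_of_isOpen {M : Type*} [AddCommMonoid M] [Module ℝ M]
    [TopologicalSpace M] [ContinuousSMul ℝ M] {V : Set M} (hV : IsOpen V) {y : M}
    (hy : y ∈ V) : ∃ α ∈ Ioo (0 : ℝ) 1, α • y ∈ V := by
  have hnear : ∀ᶠ α in 𝓝[<] (1 : ℝ), α • y ∈ V := nhdsWithin_le_nhds <|
    ((continuous_id.smul continuous_const).tendsto' 1 y (one_smul ℝ y)).eventually
      (hV.mem_nhds hy)
  obtain ⟨α, hαV, hα⟩ := (hnear.and (Ioo_mem_nhdsLT zero_lt_one)).exists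
  exact ⟨α, hα, hαV⟩

theorem norm_add_div_norm_smul {E : Type*} [SeminormedAddCommGroup E] [NormedSpace ℝ E]
    {u : E} (hu : 0 < ‖u‖) {α η : ℝ} (hα : 0 ≤ α) (hη : 0 ≤ η) :
    ‖(α + η / ‖u‖) • u‖ = α * ‖u‖ + η := by
  rw [norm_smul, Real.norm_of_nonneg (by positivity), add_mul, div_mul_cancel₀ _ hu.ne']

theorem norm_smul_add_add_div_norm_smul_le {E : Type*} [SeminormedAddCommGroup E]
    [NormedSpace ℝ E] {u : E} (hu : 0 < ‖u‖) {α η : ℝ} (hα : 0 ≤ α) (hη : 0 ≤ η) (z : E) :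
    ‖α • z + (α + η / ‖u‖) • u‖ ≤ α * ‖z + u‖ + η := by
  have hsplit : α • z + (α + η / ‖u‖) • u = α • (z + u) + (η / ‖u‖) • u := by module
  rw [hsplit]
  refine (norm_add_le _ _).trans_eq ?_
  rw [norm_smul, norm_smul, Real.norm_of_nonneg hα, Real.norm_of_nonneg (by positivity),
    div_mul_cancel₀ _ hu.ne']

theorem Filter.IsBoundedUnder.norm_add {E : Type*} [SeminormedAddCommGroup E] {u : ℕ → E}
    (hu : IsBoundedUnder (· ≤ ·) atTop fun n => ‖u n‖) (z : E) :
    IsBoundedUnder (· ≤ ·) atTop fun n => ‖z + u n‖ :=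
  (isBoundedUnder_le_add isBoundedUnder_const hu).mono_le
    (Eventually.of_forall fun n => norm_add_le z (u n))

theorem Filter.IsBoundedUnder.norm_sub {E : Type*} [SeminormedAddCommGroup E] {u : ℕ → E}
    (hu : IsBoundedUnder (· ≤ ·) atTop fun n => ‖u n‖) (z : E) :
    IsBoundedUnder (· ≤ ·) atTop fun n => ‖z - u n‖ :=
  (isBoundedUnder_le_add isBoundedUnder_const hu).mono_le
    (Eventually.of_forall fun n => norm_sub_le z (u n))

section Dual

variable {X : Type*} [NormedAddCommGroup X] [NormedSpace ℝ X]

theorem mem_szlenkDeriv_iff {ε : ℝ} (hε : 0 ≤ ε) {x : StrongDual ℝ X} :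
    x ∈ szlenkDeriv X ε ↔ ‖x‖ ≤ 1 ∧ ∀ V : Set (StrongDual ℝ X),
      IsOpen (StrongDual.toWeakDual '' V) → x ∈ V →
        ∃ p ∈ closedBall (0 : StrongDual ℝ X) 1 ∩ V,
          ∃ q ∈ closedBall (0 : StrongDual ℝ X) 1 ∩ V, ε < ‖p - q‖ := by
  refine and_congr_right fun _ => forall₂_congr fun V _ => imp_congr_right fun _ => ?_
  simp_rw [← dist_eq_norm]
  constructor
  · intro hdiam
    by_contra! hle
    exact hdiam.not_ge (diam_le_of_forall_dist_le hε hle)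
  · rintro ⟨p, hp, q, hq, hpq⟩
    exact hpq.trans_le
      (dist_le_diam_of_mem (isBounded_closedBall.subset inter_subset_left) hp hq)

theorem weakStarNull_iff {u : ℕ → StrongDual ℝ X} :
    WeakStarNull u ↔ ∀ x : X, Tendsto (fun n => u n x) atTop (𝓝 0) :=
  tendsto_iff_forall_eval_tendsto_topDualPairing

theorem WeakStarNull.smul {u : ℕ → StrongDual ℝ X} (hu : WeakStarNull u) {c : ℕ → ℝ}
    (hc : IsBoundedUnder (· ≤ ·) atTop fun n => ‖c n‖) : WeakStarNull fun n => c n • u n :=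
  weakStarNull_iff.2 fun x => by
    simpa using isBoundedUnder_le_mul_tendsto_zero hc (weakStarNull_iff.1 hu x)

theorem WeakStarNull.neg {u : ℕ → StrongDual ℝ X} (hu : WeakStarNull u) :
    WeakStarNull fun n => -u n :=
  weakStarNull_iff.2 fun x => by simpa using (weakStarNull_iff.1 hu x).neg

theorem WeakStarNull.eventually_add_mem {u : ℕ → StrongDual ℝ X} (hu : WeakStarNull u)
    {V : Set (StrongDual ℝ X)} (hV : IsOpen (StrongDual.toWeakDual '' V))
    {z : StrongDual ℝ X} (hz : z ∈ V) : ∀ᶠ n in atTop, z + u n ∈ V := by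
  have hlim : Tendsto (fun n => StrongDual.toWeakDual (z + u n)) atTop
      (𝓝 (StrongDual.toWeakDual z)) := by
    simpa using hu.const_add (StrongDual.toWeakDual z)
  filter_upwards [hlim.eventually (hV.mem_nhds ⟨z, hz, rfl⟩)] with n hn
  exact StrongDual.toWeakDual.injective.mem_set_image.1 hn

theorem exists_weakStarNull_of_mem_szlenkDeriv [TopologicalSpace.SeparableSpace X] {ε : ℝ}
    (hε : 0 ≤ ε) {x : StrongDual ℝ X} (hx : x ∈ szlenkDeriv X ε) :
    ∃ u : ℕ → StrongDual ℝ X, WeakStarNull u ∧ (∀ n, ‖x + u n‖ ≤ 1) ∧ ∀ n, ε / 2 < ‖u n‖ := by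
  have hxS : StrongDual.toWeakDual x ∈
      closure (WeakDual.toStrongDual ⁻¹' {z : StrongDual ℝ X | ‖z‖ ≤ 1 ∧ ε / 2 < ‖z - x‖}) := by
    refine mem_closure_iff.2 fun O hO hxO => ?_
    obtain ⟨p, ⟨hpB, hpO⟩, q, ⟨hqB, hqO⟩, hpq⟩ := ((mem_szlenkDeriv_iff hε).1 hx).2
      (StrongDual.toWeakDual ⁻¹' O)
      (by rwa [image_preimage_eq O StrongDual.toWeakDual.surjective]) hxO
    have hfar : ε / 2 < ‖p - x‖ ∨ ε / 2 < ‖q - x‖ := by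
      by_contra! hnear
      linarith [norm_sub_le_norm_sub_add_norm_sub p x q, norm_sub_rev x q]
    rcases hfar with hp | hq
    · exact ⟨_, hpO, by simpa using ⟨mem_closedBall_zero_iff.1 hpB, hp⟩⟩
    · exact ⟨_, hqO, by simpa using ⟨mem_closedBall_zero_iff.1 hqB, hq⟩⟩
  have : FrechetUrysohnSpace (WeakDual.toStrongDual ⁻¹' closedBall (0 : StrongDual ℝ X) 1) := by
    have := WeakDual.metrizable_of_isCompact ℝ X _ (WeakDual.isCompact_closedBall 0 1)
    infer_instance
  obtain ⟨z, hzS, hz⟩ := exists_seq_tendsto_of_mem_closure_of_subset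
    (K := WeakDual.toStrongDual ⁻¹' closedBall (0 : StrongDual ℝ X) 1)
    (fun z hz => mem_closedBall_zero_iff.2 hz.1) (by simpa using hx.1) hxS
  refine ⟨fun n => WeakDual.toStrongDual (z n) - x, ?_, fun n => ?_, fun n => (hzS n).2⟩
  · simpa [WeakStarNull] using hz.sub_const (StrongDual.toWeakDual x)
  · simpa using (hzS n).1

theorem PropMStar.limsup_norm_add_le (hM : PropMStar X) {x y : StrongDual ℝ X}
    (hxy : ‖y‖ ≤ ‖x‖) {u : ℕ → StrongDual ℝ X} (hu : WeakStarNull u)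
    (hbdd : IsBoundedUnder (· ≤ ·) atTop fun n => ‖u n‖) :
    limsup (fun n => ‖y + u n‖) atTop ≤ limsup (fun n => ‖x + u n‖) atTop := by
  obtain ⟨t, ht, hty⟩ : ∃ t ∈ Icc (0 : ℝ) 1, ‖t • x‖ = ‖y‖ := by
    rcases (norm_nonneg x).eq_or_lt with hx0 | hx0
    · exact ⟨0, left_mem_Icc.2 zero_le_one, by simp; linarith [norm_nonneg y]⟩
    · refine ⟨‖y‖ / ‖x‖, ⟨by positivity, div_le_one_of_le₀ hxy hx0.le⟩, ?_⟩
      rw [norm_smul, Real.norm_of_nonneg (by positivity), div_mul_cancel₀ _ hx0.ne']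
  have hsub : limsup (fun n => ‖x - u n‖) atTop = limsup (fun n => ‖x + u n‖) atTop := by
    simp_rw [← norm_neg (x - _), neg_sub, ← neg_add_eq_sub]
    exact hM (-x) x (norm_neg x) u hu
  have hcobdd : ∀ f : ℕ → StrongDual ℝ X, IsCoboundedUnder (· ≤ ·) atTop fun n => ‖f n‖ :=
    fun f => isCoboundedUnder_le_of_le atTop fun n => norm_nonneg _
  calc limsup (fun n => ‖y + u n‖) atTop = limsup (fun n => ‖t • x + u n‖) atTop :=
        hM y (t • x) hty.symm u hu
    _ ≤ limsup (fun n => max ‖x + u n‖ ‖x - u n‖) atTop :=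
        limsup_le_limsup (Eventually.of_forall fun n => norm_smul_add_le_max ht x (u n))
          (hcobdd _) ((hbdd.norm_add x).sup (hbdd.norm_sub x))
    _ = limsup (fun n => ‖x + u n‖) atTop := by
        rw [limsup_max (hcobdd _) (hcobdd _) (hbdd.norm_add x) (hbdd.norm_sub x), hsub,
          max_self]

theorem mem_szlenkDeriv_of_weakStarNull {ε : ℝ} (hε : ε ∈ Ioo (0 : ℝ) 2) {y : StrongDual ℝ X}
    (hy : ‖y‖ ≤ 1) {u : ℕ → StrongDual ℝ X} (hu : WeakStarNull u)
    (hbdd : IsBoundedUnder (· ≤ ·) atTop fun n => ‖u n‖) (hu_gt : ∀ n, ε / 2 < ‖u n‖)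
    (hpos : limsup (fun n => ‖y + u n‖) atTop ≤ 1)
    (hneg : limsup (fun n => ‖-y + u n‖) atTop ≤ 1) : y ∈ szlenkDeriv X ε := by
  obtain ⟨hε0, hε2⟩ := hε
  refine (mem_szlenkDeriv_iff hε0.le).2 ⟨hy, fun V hV hyV => ?_⟩
  obtain ⟨α, ⟨hα0, hα1⟩, hαV⟩ := exists_smul_mem_of_isOpen hV (mem_image_of_mem _ hyV)
  rw [← map_smul, StrongDual.toWeakDual.injective.mem_set_image] at hαV
  have hu0 : ∀ n, 0 < ‖u n‖ := fun n => (half_pos hε0).trans (hu_gt n)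
  set η := (1 - α) * ε / 2 with hη
  have hη0 : 0 ≤ η := by positivity
  set δ := (1 - α - η) / α with hδ
  have hδ0 : 0 < δ := div_pos (by rw [hη]; nlinarith) hα0
  set v : ℕ → StrongDual ℝ X := fun n => (α + η / ‖u n‖) • u n
  have hv : WeakStarNull v := hu.smul <| isBoundedUnder_of ⟨α + η / (ε / 2), fun n => by
    rw [Real.norm_of_nonneg (by positivity)]
    gcongr
    exact (hu_gt n).le⟩
  have hball : ∀ z, limsup (fun n => ‖z + u n‖) atTop ≤ 1 →
      ∀ᶠ n in atTop, ‖α • z + v n‖ ≤ 1 := by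
    intro z hz
    filter_upwards [eventually_lt_of_limsup_lt (hz.trans_lt (lt_add_of_pos_right 1 hδ0))
      (hbdd.norm_add z)] with n hn
    calc ‖α • z + v n‖ ≤ α * ‖z + u n‖ + η :=
          norm_smul_add_add_div_norm_smul_le (hu0 n) hα0.le hη0 z
      _ ≤ α * (1 + δ) + η := by gcongr
      _ = 1 := by rw [hδ]; field_simp; ring
  obtain ⟨n, hpB, hqB, hpV, hqV⟩ := ((hball y hpos).and ((hball (-y) hneg).and
    ((hv.eventually_add_mem hV hαV).and (hv.neg.eventually_add_mem hV hαV)))).exists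
  refine ⟨α • y + v n, ⟨mem_closedBall_zero_iff.2 hpB, hpV⟩, α • y + -v n,
    ⟨mem_closedBall_zero_iff.2 ?_, hqV⟩, ?_⟩
  · rwa [smul_neg, ← norm_neg, neg_add, neg_neg] at hqB
  · calc ε = α * ε + 2 * η := by ring
      _ < 2 * (α * ‖u n‖ + η) := by nlinarith [hu_gt n]
      _ = ‖α • y + v n - (α • y + -v n)‖ := by
          rw [add_sub_add_left_eq_sub, sub_neg_eq_add, ← two_smul ℝ, norm_smul,
            norm_add_div_norm_smul (hu0 n) hα0.le hη0, Real.norm_two]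

end Dual

theorem mem_szlenkDeriv_of_norm_le_general (X : Type*) [NormedAddCommGroup X]
    [NormedSpace ℝ X] [TopologicalSpace.SeparableSpace X]
    (hM : PropMStar X) (ε : ℝ) (hε : ε ∈ Set.Ioo (0 : ℝ) 2)
    (x₀ y₀ : StrongDual ℝ X) (hx₀ : x₀ ∈ szlenkDeriv X ε)
    (hy₀ : ‖y₀‖ ≤ ‖x₀‖) :
    y₀ ∈ szlenkDeriv X ε := by
  obtain ⟨w, hw, hx₀w, hw_gt⟩ := exists_weakStarNull_of_mem_szlenkDeriv hε.1.le hx₀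
  have hw_bdd : IsBoundedUnder (· ≤ ·) atTop fun n => ‖w n‖ :=
    isBoundedUnder_of ⟨2, fun n => calc
      ‖w n‖ = ‖(x₀ + w n) - x₀‖ := by rw [add_sub_cancel_left]
      _ ≤ ‖x₀ + w n‖ + ‖x₀‖ := norm_sub_le _ _
      _ ≤ 2 := by linarith [hx₀w n, hx₀.1]⟩
  have hx₀_limsup : limsup (fun n => ‖x₀ + w n‖) atTop ≤ 1 :=
    limsup_le_of_le (isCoboundedUnder_le_of_le atTop fun n => norm_nonneg _)
      (Eventually.of_forall hx₀w)
  exact mem_szlenkDeriv_of_weakStarNull hε (hy₀.trans hx₀.1) hw hw_bdd hw_gt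
    ((hM.limsup_norm_add_le hy₀ hw hw_bdd).trans hx₀_limsup)
    ((hM.limsup_norm_add_le ((norm_neg y₀).trans_le hy₀) hw hw_bdd).trans hx₀_limsup)

theorem mem_szlenkDeriv_of_norm_le (X : Type*) [NormedAddCommGroup X]
    [NormedSpace ℝ X] [CompleteSpace X] [TopologicalSpace.SeparableSpace X]
    (hM : PropMStar X) (ε : ℝ) (hε : ε ∈ Set.Ioo (0 : ℝ) 2)
    (x₀ y₀ : StrongDual ℝ X) (hx₀ : x₀ ∈ szlenkDeriv X ε)
    (hy₀ : ‖y₀‖ ≤ ‖x₀‖) :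
    y₀ ∈ szlenkDeriv X ε :=
  mem_szlenkDeriv_of_norm_le_general X hM ε hε x₀ y₀ hx₀ hy₀
end

section
/- Let X be a separable real Banach space, q ∈ [1,∞), and suppose X has property (m_q*). Then for every ε ∈ (0,2), s_ε B_{X*} ⊆ (1 − (ε/2)^q)^{1/q} · B_{X*}, i.e. every x* ∈ s_ε B_{X*} satisfies ‖x*‖ ≤ (1 − (ε/2)^q)^{1/q}. -/
open Filter Topology Metric

/-- Kalton–Werner property (m_q*). -/
def PropmqStar (X : Type*) [NormedAddCommGroup X] [NormedSpace ℝ X] (q : ℝ) : Prop :=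
  ∀ x : StrongDual ℝ X, ∀ u : ℕ → StrongDual ℝ X, WeakStarNull u →
    Filter.limsup (fun n => ‖x + u n‖) Filter.atTop
      = (‖x‖ ^ q + (Filter.limsup (fun n => ‖u n‖) Filter.atTop) ^ q) ^ (1 / q)

/-! A point of `s_ε B_{X*}` is a weak*-limit of points of the ball at norm-distance `≥ ε/2` from it;
for separable `X` the ball is weak*-metrizable, so this limit can be taken along a sequence
`x + u_n` with `u_n` weak*-null and `limsup ‖u_n‖ ≥ ε/2`. Property (m_q*) then gives
`(‖x‖^q + (ε/2)^q)^{1/q} ≤ limsup ‖x + u_n‖ ≤ 1`. -/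

theorem Metric.exists_half_lt_dist_of_lt_diam {α : Type*} [PseudoMetricSpace α] {s : Set α}
    {ε : ℝ} (hε : 0 ≤ ε) (h : ε < diam s) (x : α) : ∃ y ∈ s, ε / 2 < dist y x := by
  by_contra! hs
  have : diam s ≤ 2 * (ε / 2) := diam_le_of_subset_closedBall (by positivity) hs
  linarith

theorem WeakDual.exists_seq_tendsto_of_mem_closure {𝕜 E : Type*} [NontriviallyNormedField 𝕜]
    [ProperSpace 𝕜] [SeminormedAddCommGroup E] [NormedSpace 𝕜 E]
    [TopologicalSpace.SeparableSpace E] {s : Set (WeakDual 𝕜 E)} {x : WeakDual 𝕜 E}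
    (hs : Bornology.IsBounded s) (hx : x ∈ closure s) :
    ∃ w : ℕ → WeakDual 𝕜 E, (∀ n, w n ∈ s) ∧ Tendsto w atTop (𝓝 x) := by
  have hK : IsCompact (closure s) :=
    isCompact_of_bounded_of_closed (isBounded_closure hs) isClosed_closure
  have := metrizable_of_isCompact 𝕜 E _ hK
  have hx' : (⟨x, hx⟩ : closure s) ∈ closure (Subtype.val ⁻¹' s) := by
    rw [Topology.IsEmbedding.subtypeVal.closure_eq_preimage_closure_image,
      Subtype.image_preimage_coe, Set.inter_eq_right.mpr subset_closure]
    exact hx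
  obtain ⟨w, hws, hw⟩ := mem_closure_iff_seq_limit.mp hx'
  exact ⟨fun n => w n, hws, (continuous_subtype_val.tendsto _).comp hw⟩

theorem toWeakDual_mem_closure_of_mem_szlenkDeriv {X : Type*} [NormedAddCommGroup X]
    [NormedSpace ℝ X] {ε : ℝ} (hε : 0 ≤ ε) {x : StrongDual ℝ X} (hx : x ∈ szlenkDeriv X ε) :
    StrongDual.toWeakDual x ∈
      closure (StrongDual.toWeakDual '' {w | ‖w‖ ≤ 1 ∧ ε / 2 < ‖w - x‖}) := by
  rw [_root_.mem_closure_iff]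
  intro U hU hxU
  obtain ⟨w, ⟨hw₁, hwU⟩, hwx⟩ :=
    exists_half_lt_dist_of_lt_diam hε (hx.2 (StrongDual.toWeakDual ⁻¹' U)
      (by rwa [Set.image_preimage_eq U StrongDual.toWeakDual.surjective]) hxU) x
  rw [mem_closedBall_zero_iff] at hw₁
  rw [dist_eq_norm] at hwx
  exact ⟨_, hwU, w, ⟨hw₁, hwx⟩, rfl⟩

theorem rpow_le_rpow_sub_of_add_rpow_le_one {a b L q : ℝ} (ha : 0 ≤ a) (hb : 0 ≤ b)
    (hq : 0 < q) (hbL : b ≤ L) (h : (a ^ q + L ^ q) ^ (1 / q) ≤ 1) :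
    a ≤ (1 - b ^ q) ^ (1 / q) := by
  have hbL' : b ^ q ≤ L ^ q := Real.rpow_le_rpow hb hbL hq.le
  have hL : 0 ≤ L ^ q := Real.rpow_nonneg (hb.trans hbL) q
  rw [one_div] at h ⊢
  rw [Real.rpow_inv_le_iff_of_pos (by positivity) zero_le_one hq, Real.one_rpow] at h
  rw [Real.le_rpow_inv_iff_of_pos ha (by linarith [Real.rpow_nonneg ha q]) hq]
  linarith

theorem norm_le_of_propmqStar {X : Type*} [NormedAddCommGroup X] [NormedSpace ℝ X] {q r : ℝ}
    (hq : 0 < q) (hmq : PropmqStar X q) (hr : 0 ≤ r) {x : StrongDual ℝ X}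
    {w : ℕ → StrongDual ℝ X} (hw₁ : ∀ n, ‖w n‖ ≤ 1) (hwx : ∀ n, r ≤ ‖w n - x‖)
    (hlim : Tendsto (fun n => StrongDual.toWeakDual (w n)) atTop
      (𝓝 (StrongDual.toWeakDual x))) :
    ‖x‖ ≤ (1 - r ^ q) ^ (1 / q) := by
  have hnull : WeakStarNull fun n => w n - x := by
    simpa [WeakStarNull] using hlim.sub_const (StrongDual.toWeakDual x)
  have hbdd : ∀ n, ‖w n - x‖ ≤ 1 + ‖x‖ := fun n =>
    (norm_sub_le _ _).trans (by linarith [hw₁ n])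
  have hr_le : r ≤ limsup (fun n => ‖w n - x‖) atTop :=
    le_limsup_of_frequently_le (Frequently.of_forall hwx) (isBoundedUnder_of ⟨_, hbdd⟩)
  have hle_one : limsup (fun n => ‖x + (w n - x)‖) atTop ≤ 1 := by
    simp only [add_sub_cancel]
    exact limsup_le_of_le (isCoboundedUnder_le_of_le _ fun n => norm_nonneg _)
      (Eventually.of_forall hw₁)
  rw [hmq x _ hnull] at hle_one
  exact rpow_le_rpow_sub_of_add_rpow_le_one (norm_nonneg x) hr hq hr_le hle_one

theorem szlenkDeriv_subset_ball_of_propmqStar_general (X : Type*) [NormedAddCommGroup X]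
    [NormedSpace ℝ X] [TopologicalSpace.SeparableSpace X]
    (q : ℝ) (hq : 1 ≤ q) (hmq : PropmqStar X q) (ε : ℝ) (hε : ε ∈ Set.Ioo (0 : ℝ) 2) :
    ∀ x ∈ szlenkDeriv X ε, ‖x‖ ≤ (1 - (ε / 2) ^ q) ^ (1 / q) := by
  intro x hx
  have hS := toWeakDual_mem_closure_of_mem_szlenkDeriv hε.1.le hx
  have hbdd : Bornology.IsBounded
      (StrongDual.toWeakDual '' {w : StrongDual ℝ X | ‖w‖ ≤ 1 ∧ ε / 2 < ‖w - x‖}) :=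
    (isBounded_closedBall (x := (0 : StrongDual ℝ X)) (r := 1)).subset
      (by rintro _ ⟨w, hw, rfl⟩; exact mem_closedBall_zero_iff.mpr hw.1)
  obtain ⟨v, hws, hlim⟩ := WeakDual.exists_seq_tendsto_of_mem_closure hbdd hS
  choose w hw hw_eq using hws
  rw [← funext hw_eq] at hlim
  exact norm_le_of_propmqStar (by linarith) hmq (by linarith [hε.1])
    (fun n => (hw n).1) (fun n => (hw n).2.le) hlim

theorem szlenkDeriv_subset_ball_of_propmqStar (X : Type*) [NormedAddCommGroup X]
    [NormedSpace ℝ X] [CompleteSpace X] [TopologicalSpace.SeparableSpace X]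
    (q : ℝ) (hq : 1 ≤ q) (hmq : PropmqStar X q) (ε : ℝ) (hε : ε ∈ Set.Ioo (0 : ℝ) 2) :
    ∀ x ∈ szlenkDeriv X ε, ‖x‖ ≤ (1 - (ε / 2) ^ q) ^ (1 / q) :=
  szlenkDeriv_subset_ball_of_propmqStar_general X q hq hmq ε hε
end

section
/- For every real sequence x = (x_i)_{i≥1} with ‖x‖_B < ∞ and every n ∈ ℕ, one has ‖x‖_B² ≥ ‖P_n x‖_B² + ‖x − P_n x‖_B². -/
open Filter Topology

/-- A finite set of (positive) indices is admissible if it is nonempty and its cardinality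
is at most its minimum. -/
def BAdmissible (E : Finset ℕ) : Prop := E.Nonempty ∧ ∀ i ∈ E, E.card ≤ i

/-- The set of values whose supremum defines the Baernstein norm of a real sequence `x`:
all numbers `(∑_{j<k} (∑_{i ∈ E j} |x i|)²)^{1/2}` over finite increasing chains
`E 0 < E 1 < ... < E (k-1)` of admissible sets. -/
def baernsteinSet (x : ℕ → ℝ) : Set ℝ :=
  {r | ∃ (k : ℕ) (E : ℕ → Finset ℕ),
    (∀ j < k, BAdmissible (E j)) ∧
    (∀ j, j + 1 < k → ∀ a ∈ E j, ∀ b ∈ E (j + 1), a < b) ∧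
    r = Real.sqrt (∑ j ∈ Finset.range k, (∑ i ∈ E j, |x i|) ^ 2)}

/-- The Baernstein norm of a real sequence (as a supremum in `ℝ`). -/
noncomputable def baernsteinNorm (x : ℕ → ℝ) : ℝ := sSup (baernsteinSet x)

lemma badm_subset {E E' : Finset ℕ} (h : BAdmissible E) (hss : E' ⊆ E) (hne : E'.Nonempty) :
    BAdmissible E' :=
  ⟨hne, fun i hi => le_trans (Finset.card_le_card hss) (h.2 i (hss hi))⟩

lemma zero_mem_baernsteinSet (x : ℕ → ℝ) : (0 : ℝ) ∈ baernsteinSet x :=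
  ⟨0, fun _ => ∅, by simp, by simp, by simp⟩

lemma baernsteinSet_nonneg {x : ℕ → ℝ} {r : ℝ} (h : r ∈ baernsteinSet x) : 0 ≤ r := by
  obtain ⟨k, E, _, _, rfl⟩ := h
  exact Real.sqrt_nonneg _

lemma chain_cross {E : ℕ → Finset ℕ} {k : ℕ} (hne : ∀ j < k, (E j).Nonempty)
    (hord : ∀ j, j + 1 < k → ∀ a ∈ E j, ∀ b ∈ E (j + 1), a < b) :
    ∀ j j' : ℕ, j < j' → j' < k → ∀ a ∈ E j, ∀ b ∈ E j', a < b := by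
  intro j j'
  induction j' with
  | zero => omega
  | succ m ih =>
    intro hlt hk a ha b hb
    rcases Nat.lt_or_ge j m with hc | hc
    · obtain ⟨c, hc'⟩ := hne m (by omega)
      exact lt_trans (ih hc (by omega) a ha c hc') (hord m hk c hc' b hb)
    · have hj : j = m := by omega
      subst hj
      exact hord j hk a ha b hb

/-- A "weak chain" (possibly empty sets, but strong cross-ordering) still produces an
element of the Baernstein set. -/
lemma mem_of_weak_chain (x : ℕ → ℝ) {k : ℕ} {E : ℕ → Finset ℕ}
    (hadm : ∀ j < k, (E j).Nonempty → BAdmissible (E j))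
    (hord : ∀ j j', j < j' → j' < k → ∀ a ∈ E j, ∀ b ∈ E j', a < b) :
    Real.sqrt (∑ j ∈ Finset.range k, (∑ i ∈ E j, |x i|) ^ 2) ∈ baernsteinSet x := by
  classical
  set J : Finset ℕ := (Finset.range k).filter (fun j => (E j).Nonempty) with hJ
  set m : ℕ := J.card with hm
  set f : Fin m ↪o ℕ := J.orderEmbOfFin rfl with hf
  have hfJ : ∀ i : Fin m, f i ∈ J := fun i => J.orderEmbOfFin_mem rfl i
  have hfk : ∀ i : Fin m, f i < k := by
    intro i
    have := hfJ i
    simp [hJ, Finset.mem_filter] at this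
    exact this.1
  have hfne : ∀ i : Fin m, (E (f i)).Nonempty := by
    intro i
    have := hfJ i
    simp [hJ, Finset.mem_filter] at this
    exact this.2
  refine ⟨m, fun j => if h : j < m then E (f ⟨j, h⟩) else ∅, ?_, ?_, ?_⟩
  · intro j hj
    simp only [dif_pos hj]
    exact hadm _ (hfk ⟨j, hj⟩) (hfne ⟨j, hj⟩)
  · intro j hj a ha b hb
    have hj' : j < m := by omega
    simp only [dif_pos hj, dif_pos hj'] at ha hb
    have hlt : f ⟨j, hj'⟩ < f ⟨j + 1, hj⟩ := f.strictMono (by simp [Fin.lt_def])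
    exact hord _ _ hlt (hfk ⟨j + 1, hj⟩) a ha b hb
  · congr 1
    have h1 : ∑ j ∈ Finset.range m, (∑ i ∈ (if h : j < m then E (f ⟨j, h⟩) else ∅), |x i|) ^ 2
        = ∑ j : Fin m, (∑ i ∈ E (f j), |x i|) ^ 2 := by
      rw [← Fin.sum_univ_eq_sum_range (fun j => (∑ i ∈ (if h : j < m then E (f ⟨j, h⟩) else ∅), |x i|) ^ 2)]
      apply Finset.sum_congr rfl
      intro j _
      simp [j.isLt]
    have h2 : ∑ j : Fin m, (∑ i ∈ E (f j), |x i|) ^ 2 = ∑ j ∈ J, (∑ i ∈ E j, |x i|) ^ 2 := by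
      apply Finset.sum_bij (fun (i : Fin m) _ => f i)
      · intro i _; exact hfJ i
      · intro i _ i' _ h; exact f.injective h
      · intro j hj
        have : (j : ℕ) ∈ Set.range f := by
          rw [hf, Finset.range_orderEmbOfFin]; exact hj
        obtain ⟨i, hi⟩ := this
        exact ⟨i, Finset.mem_univ _, hi⟩
      · intro i _; rfl
    have h3 : ∑ j ∈ J, (∑ i ∈ E j, |x i|) ^ 2 = ∑ j ∈ Finset.range k, (∑ i ∈ E j, |x i|) ^ 2 := by
      apply Finset.sum_subset (Finset.filter_subset _ _)
      intro j _ hjJ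
      simp only [hJ, Finset.mem_filter, not_and] at hjJ
      have : E j = ∅ := by
        by_contra h
        exact hjJ (by assumption) (Finset.nonempty_iff_ne_empty.mpr h)
      simp [this]
    rw [h1, h2, h3]

lemma key_ineq (x : ℕ → ℝ) (hx : BddAbove (baernsteinSet x)) (n : ℕ)
    {a b : ℝ} (ha : a ∈ baernsteinSet (fun i => if i ≤ n then x i else 0))
    (hb : b ∈ baernsteinSet (fun i => x i - (if i ≤ n then x i else 0))) :
    a ^ 2 + b ^ 2 ≤ baernsteinNorm x ^ 2 := by
  classical
  obtain ⟨k, E, hEadm, hEord, rfl⟩ := ha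
  obtain ⟨m, F, hFadm, hFord, rfl⟩ := hb
  set G : ℕ → Finset ℕ := fun j =>
    if j < k then (E j).filter (fun i => i ≤ n) else (F (j - k)).filter (fun i => n < i) with hG
  have hGadm : ∀ j < k + m, (G j).Nonempty → BAdmissible (G j) := by
    intro j hj hne
    by_cases h : j < k
    · exact badm_subset (hEadm j h) (by simp [hG, h, Finset.filter_subset]) hne
    · have : j - k < m := by omega
      exact badm_subset (hFadm _ this) (by simp [hG, h, Finset.filter_subset]) hne
  have hGord : ∀ j j', j < j' → j' < k + m → ∀ a ∈ G j, ∀ b ∈ G j', a < b := by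
    intro j j' hlt hj' p hp q hq
    by_cases h1 : j < k <;> by_cases h2 : j' < k
    · simp only [hG, if_pos h1, if_pos h2, Finset.mem_filter] at hp hq
      exact chain_cross (fun j hj => (hEadm j hj).1) hEord j j' hlt h2 p hp.1 q hq.1
    · simp only [hG, if_pos h1, if_neg h2, Finset.mem_filter] at hp hq
      omega
    · omega
    · simp only [hG, if_neg h1, if_neg h2, Finset.mem_filter] at hp hq
      have hlt' : j - k < j' - k := by omega
      exact chain_cross (fun j hj => (hFadm j hj).1) hFord _ _ hlt' (by omega) p hp.1 q hq.1
  have hmem := mem_of_weak_chain x hGadm hGord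
  set S : ℝ := ∑ j ∈ Finset.range (k + m), (∑ i ∈ G j, |x i|) ^ 2 with hS
  have hSsplit : S = (∑ j ∈ Finset.range k, (∑ i ∈ E j, |(fun i => if i ≤ n then x i else 0) i|) ^ 2)
      + (∑ j ∈ Finset.range m, (∑ i ∈ F j, |(fun i => x i - (if i ≤ n then x i else 0)) i|) ^ 2) := by
    rw [hS, Finset.sum_range_add]
    congr 1
    · apply Finset.sum_congr rfl
      intro j hj
      rw [Finset.mem_range] at hj
      congr 1
      rw [hG]
      simp only [if_pos hj]
      rw [Finset.sum_filter]
      apply Finset.sum_congr rfl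
      intro i _
      by_cases h : i ≤ n <;> simp [h]
    · apply Finset.sum_congr rfl
      intro j hj
      rw [Finset.mem_range] at hj
      congr 1
      have hnk : ¬ (k + j < k) := by omega
      simp only [hG, hnk, if_false, Nat.add_sub_cancel_left]
      rw [Finset.sum_filter]
      apply Finset.sum_congr rfl
      intro i _
      by_cases h : i ≤ n <;> simp [h]
  have hS1 : (0:ℝ) ≤ ∑ j ∈ Finset.range k, (∑ i ∈ E j, |(fun i => if i ≤ n then x i else 0) i|) ^ 2 :=
    Finset.sum_nonneg fun _ _ => sq_nonneg _
  have hS2 : (0:ℝ) ≤ ∑ j ∈ Finset.range m, (∑ i ∈ F j, |(fun i => x i - (if i ≤ n then x i else 0)) i|) ^ 2 :=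
    Finset.sum_nonneg fun _ _ => sq_nonneg _
  have hSnn : 0 ≤ S := by rw [hSsplit]; positivity
  have hle : Real.sqrt S ≤ baernsteinNorm x := le_csSup hx hmem
  have hCnn : 0 ≤ baernsteinNorm x := le_trans (baernsteinSet_nonneg hmem) hle
  have hsq : Real.sqrt S ^ 2 = S := Real.sq_sqrt hSnn
  have : S ≤ baernsteinNorm x ^ 2 := by
    calc S = Real.sqrt S ^ 2 := hsq.symm
    _ ≤ baernsteinNorm x ^ 2 := by
        apply pow_le_pow_left₀ (Real.sqrt_nonneg _) hle
  rw [Real.sq_sqrt hS1, Real.sq_sqrt hS2, ← hSsplit]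
  exact this

theorem baernstein_sq_ineq (x : ℕ → ℝ) (hx : BddAbove (baernsteinSet x)) (n : ℕ) :
    baernsteinNorm (fun i => if i ≤ n then x i else 0) ^ 2 +
      baernsteinNorm (fun i => x i - (if i ≤ n then x i else 0)) ^ 2
        ≤ baernsteinNorm x ^ 2 := by
  set y : ℕ → ℝ := fun i => if i ≤ n then x i else 0 with hy
  set z : ℕ → ℝ := fun i => x i - (if i ≤ n then x i else 0) with hz
  set C : ℝ := baernsteinNorm x with hC
  have h0A : (0:ℝ) ∈ baernsteinSet y := zero_mem_baernsteinSet y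
  have h0B : (0:ℝ) ∈ baernsteinSet z := zero_mem_baernsteinSet z
  have hCnn : 0 ≤ C := le_csSup hx (zero_mem_baernsteinSet x)
  have key : ∀ a ∈ baernsteinSet y, ∀ b ∈ baernsteinSet z, a ^ 2 + b ^ 2 ≤ C ^ 2 := by
    intro a ha b hb
    exact key_ineq x hx n ha hb
  have hAbdd : BddAbove (baernsteinSet y) := by
    refine ⟨C, fun a ha => ?_⟩
    have h1 : a ^ 2 ≤ C ^ 2 := by have := key a ha 0 h0B; nlinarith
    have h2 : 0 ≤ a := baernsteinSet_nonneg ha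
    nlinarith
  have hBbdd : BddAbove (baernsteinSet z) := by
    refine ⟨C, fun b hb => ?_⟩
    have h1 : b ^ 2 ≤ C ^ 2 := by have := key 0 h0A b hb; nlinarith
    have h2 : 0 ≤ b := baernsteinSet_nonneg hb
    nlinarith
  have hBnn : 0 ≤ baernsteinNorm z := le_csSup hBbdd h0B
  have hAnn : 0 ≤ baernsteinNorm y := le_csSup hAbdd h0A
  -- Step 1: for each a ∈ A, (sSup B)^2 ≤ C^2 - a^2
  have step1 : ∀ a ∈ baernsteinSet y, baernsteinNorm z ^ 2 ≤ C ^ 2 - a ^ 2 := by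
    intro a ha
    have hca : 0 ≤ C ^ 2 - a ^ 2 := by have := key a ha 0 h0B; nlinarith
    have hB : baernsteinNorm z ≤ Real.sqrt (C ^ 2 - a ^ 2) := by
      apply csSup_le ⟨0, h0B⟩
      intro b hb
      rw [Real.le_sqrt (baernsteinSet_nonneg hb) hca]
      have := key a ha b hb
      linarith
    calc baernsteinNorm z ^ 2 ≤ Real.sqrt (C ^ 2 - a ^ 2) ^ 2 := by
          apply pow_le_pow_left₀ hBnn hB
      _ = C ^ 2 - a ^ 2 := Real.sq_sqrt hca
  have hcb : 0 ≤ C ^ 2 - baernsteinNorm z ^ 2 := by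
    have := step1 0 h0A; simpa using this
  have step2 : baernsteinNorm y ≤ Real.sqrt (C ^ 2 - baernsteinNorm z ^ 2) := by
    apply csSup_le ⟨0, h0A⟩
    intro a ha
    rw [Real.le_sqrt (baernsteinSet_nonneg ha) hcb]
    have := step1 a ha
    linarith
  have : baernsteinNorm y ^ 2 ≤ C ^ 2 - baernsteinNorm z ^ 2 := by
    calc baernsteinNorm y ^ 2 ≤ Real.sqrt (C ^ 2 - baernsteinNorm z ^ 2) ^ 2 := by
          apply pow_le_pow_left₀ hAnn step2
      _ = _ := Real.sq_sqrt hcb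
  linarith
end

section
/- The Baernstein norm satisfies: ‖e₁‖_B = 1 and ‖(1/√2)(e₁ + e₂)‖_B = 1, yet ‖e₁ + e_n‖_B = √2 for every n ≥ 2, while ‖(1/√2)(e₁ + e₂) + e_n‖_B = √(2 + √2) for every n ≥ 3. In particular, the two limits lim_{n→∞} ‖e₁ + e_n‖_B and lim_{n→∞} ‖(1/√2)(e₁+e₂) + e_n‖_B are different although ‖e₁‖_B = ‖(1/√2)(e₁+e₂)‖_B. -/
open Filter Topology

/-- The `i`-th standard unit sequence. -/
def unitSeq (i : ℕ) : ℕ → ℝ := fun j => if j = i then 1 else 0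

/-!
An admissible set containing `1` is `{1}`, so in a chain of admissible sets the block containing
`1`, if any, carries `|x₁|` alone, and the remaining blocks are disjoint subsets of `{2, 3, …}`.
A sum of squares of nonnegative numbers is at most the square of their sum, hence
`‖x‖²_B ≤ x₁² + (∑_{i ≥ 2} |xᵢ|)²`, with equality as soon as the support `S` of the tail is
admissible (take the chain `{1} < S`). For `(1/√2)(e₁ + e₂) + eₙ` the tail `{2, n}` is admissible
and the bound is `1/2 + (1/√2 + 1)² = 2 + √2`, whereas for `e₁ + eₙ` it is only `1 + 1 = 2`.
-/

open Finset

lemma BAdmissible.singleton {n : ℕ} (hn : 1 ≤ n) : BAdmissible {n} :=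
  ⟨singleton_nonempty n, fun i hi => by simpa [mem_singleton.mp hi] using hn⟩

lemma BAdmissible.pair {p q : ℕ} (hp : 2 ≤ p) (hq : 2 ≤ q) : BAdmissible {p, q} := by
  refine ⟨insert_nonempty p {q}, fun i hi => ?_⟩
  have hcard : ({p, q} : Finset ℕ).card ≤ 2 := card_le_two
  rcases mem_insert.mp hi with rfl | hi
  · omega
  · rw [mem_singleton.mp hi]; omega

lemma BAdmissible.eq_singleton_one {E : Finset ℕ} (hE : BAdmissible E) (h1 : 1 ∈ E) : E = {1} :=
  eq_singleton_iff_unique_mem.mpr ⟨h1, fun _ hi => card_le_one.mp (hE.2 1 h1) _ hi _ h1⟩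

lemma BAdmissible.sq_sum_abs_eq {E : Finset ℕ} (hE : BAdmissible E) (x : ℕ → ℝ) :
    (∑ i ∈ E, |x i|) ^ 2 = ∑ i ∈ E, (if i = 1 then x 1 ^ 2 else 0)
      + (∑ i ∈ E, if i = 1 then 0 else |x i|) ^ 2 := by
  by_cases h1 : 1 ∈ E
  · simp [hE.eq_singleton_one h1]
  · have hne : ∀ i ∈ E, i ≠ 1 := fun i hi h => h1 (h ▸ hi)
    rw [sum_congr rfl fun i hi => if_neg (hne i hi), sum_congr rfl fun i hi => if_neg (hne i hi),
      sum_const_zero, zero_add]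

section Chain

variable {k : ℕ} {E : ℕ → Finset ℕ}

lemma chain_mem_lt (hne : ∀ j < k, (E j).Nonempty)
    (hord : ∀ j, j + 1 < k → ∀ a ∈ E j, ∀ b ∈ E (j + 1), a < b)
    {j j' : ℕ} (hjj' : j < j') (hj' : j' < k) : ∀ a ∈ E j, ∀ b ∈ E j', a < b := by
  induction j' with
  | zero => omega
  | succ m ih =>
    intro a ha b hb
    rcases (Nat.lt_succ_iff.mp hjj').eq_or_lt with rfl | hjm
    · exact hord j hj' a ha b hb
    · obtain ⟨c, hc⟩ := hne m (by omega)
      exact (ih hjm (by omega) a ha c hc).trans (hord m hj' c hc b hb)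

lemma chain_pairwiseDisjoint (hne : ∀ j < k, (E j).Nonempty)
    (hord : ∀ j, j + 1 < k → ∀ a ∈ E j, ∀ b ∈ E (j + 1), a < b) :
    ((range k : Finset ℕ) : Set ℕ).PairwiseDisjoint E := by
  intro j hj j' hj' hjj'
  simp only [coe_range, Set.mem_Iio] at hj hj'
  refine disjoint_left.mpr fun i hi hi' => ?_
  rcases lt_or_gt_of_ne hjj' with h | h
  · exact lt_irrefl i (chain_mem_lt hne hord h hj' i hi i hi')
  · exact lt_irrefl i (chain_mem_lt hne hord h hj i hi' i hi)

lemma sum_chain_sum_le (hne : ∀ j < k, (E j).Nonempty)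
    (hord : ∀ j, j + 1 < k → ∀ a ∈ E j, ∀ b ∈ E (j + 1), a < b)
    {w : ℕ → ℝ} {T : Finset ℕ} (hw : ∀ i, 0 ≤ w i) (hT : ∀ i ∉ T, w i = 0) :
    ∑ j ∈ range k, ∑ i ∈ E j, w i ≤ ∑ i ∈ T, w i := by
  classical
  rw [← sum_biUnion (chain_pairwiseDisjoint hne hord)]
  calc ∑ i ∈ (range k).biUnion E, w i ≤ ∑ i ∈ (range k).biUnion E ∪ T, w i :=
        sum_le_sum_of_subset_of_nonneg subset_union_left fun i _ _ => hw i
    _ = ∑ i ∈ T, w i := (sum_subset subset_union_right fun i _ hi => hT i hi).symm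

end Chain

lemma le_of_mem_baernsteinSet {x : ℕ → ℝ} {S : Finset ℕ} (h1S : 1 ∉ S)
    (hx : ∀ i, i ≠ 1 → i ∉ S → x i = 0) {r : ℝ} (hr : r ∈ baernsteinSet x) :
    r ≤ Real.sqrt (x 1 ^ 2 + (∑ i ∈ S, |x i|) ^ 2) := by
  obtain ⟨k, E, hadm, hord, rfl⟩ := hr
  have hne : ∀ j < k, (E j).Nonempty := fun j hj => (hadm j hj).1
  set tail : ℕ → ℝ := fun i => if i = 1 then 0 else |x i|
  have htail : ∑ i ∈ S, tail i = ∑ i ∈ S, |x i| :=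
    sum_congr rfl fun i hi => if_neg fun h : i = 1 => h1S (h ▸ hi)
  refine Real.sqrt_le_sqrt ?_
  calc ∑ j ∈ range k, (∑ i ∈ E j, |x i|) ^ 2
      = ∑ j ∈ range k, ∑ i ∈ E j, (if i = 1 then x 1 ^ 2 else 0)
        + ∑ j ∈ range k, (∑ i ∈ E j, tail i) ^ 2 := by
        rw [← sum_add_distrib]
        exact sum_congr rfl fun j hj => (hadm j (mem_range.mp hj)).sq_sum_abs_eq x
    _ ≤ ∑ i ∈ {1}, (if i = 1 then x 1 ^ 2 else 0)
        + (∑ j ∈ range k, ∑ i ∈ E j, tail i) ^ 2 := by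
        gcongr
        · exact sum_chain_sum_le hne hord (fun i => by positivity)
            fun i hi => if_neg (by simpa using hi)
        · exact sum_sq_le_sq_sum_of_nonneg fun j _ => sum_nonneg fun i _ => by positivity
    _ ≤ x 1 ^ 2 + (∑ i ∈ S, |x i|) ^ 2 := by
        rw [sum_singleton, if_pos rfl, ← htail]
        gcongr
        refine sum_chain_sum_le hne hord (fun i => by positivity) fun i hi => ?_
        by_cases h1 : i = 1
        · exact if_pos h1
        · simp [tail, h1, hx i h1 hi]

lemma sqrt_mem_baernsteinSet {x : ℕ → ℝ} {S : Finset ℕ} (hS : BAdmissible S) (h1S : 1 ∉ S) :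
    Real.sqrt (x 1 ^ 2 + (∑ i ∈ S, |x i|) ^ 2) ∈ baernsteinSet x := by
  have hlt : ∀ b ∈ S, 1 < b := fun b hb =>
    lt_of_le_of_ne (hS.1.card_pos.trans_le (hS.2 b hb)) fun h => h1S (h ▸ hb)
  refine ⟨2, fun j => if j = 0 then {1} else S, fun j hj => ?_, fun j hj a ha b hb => ?_, ?_⟩
  · interval_cases j
    exacts [BAdmissible.singleton le_rfl, hS]
  · obtain rfl : j = 0 := by omega
    simp only [if_true, one_ne_zero, if_false, zero_add, mem_singleton] at ha hb
    exact ha ▸ hlt b hb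
  · simp [sum_range_succ]

theorem baernsteinNorm_eq_sqrt {x : ℕ → ℝ} {S : Finset ℕ} (hS : BAdmissible S) (h1S : 1 ∉ S)
    (hx : ∀ i, i ≠ 1 → i ∉ S → x i = 0) :
    baernsteinNorm x = Real.sqrt (x 1 ^ 2 + (∑ i ∈ S, |x i|) ^ 2) :=
  le_antisymm
    (csSup_le ⟨_, sqrt_mem_baernsteinSet hS h1S⟩ fun _ => le_of_mem_baernsteinSet h1S hx)
    (le_csSup ⟨_, fun _ => le_of_mem_baernsteinSet h1S hx⟩ (sqrt_mem_baernsteinSet hS h1S))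

theorem baernstein_fails_MStar_witness :
    baernsteinNorm (unitSeq 1) = 1 ∧
    baernsteinNorm (fun j => (1 / Real.sqrt 2) * (unitSeq 1 j + unitSeq 2 j)) = 1 ∧
    (∀ n, 2 ≤ n → baernsteinNorm (fun j => unitSeq 1 j + unitSeq n j) = Real.sqrt 2) ∧
    (∀ n, 3 ≤ n →
      baernsteinNorm (fun j => (1 / Real.sqrt 2) * (unitSeq 1 j + unitSeq 2 j) + unitSeq n j)
        = Real.sqrt (2 + Real.sqrt 2)) ∧
    Real.sqrt 2 ≠ Real.sqrt (2 + Real.sqrt 2) := by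
  have hsq : Real.sqrt 2 ^ 2 = 2 := Real.sq_sqrt zero_le_two
  refine ⟨?_, ?_, fun n hn => ?_, fun n hn => ?_, ?_⟩
  · rw [baernsteinNorm_eq_sqrt (BAdmissible.singleton one_le_two) (by simp)
      fun i h1 h2 => by simp_all [unitSeq]]
    simp [unitSeq]
  · rw [baernsteinNorm_eq_sqrt (BAdmissible.singleton one_le_two) (by simp)
      fun i h1 h2 => by simp_all [unitSeq]]
    norm_num [unitSeq]
  · have hn1 : n ≠ 1 := by omega
    rw [baernsteinNorm_eq_sqrt (BAdmissible.singleton (by omega : 1 ≤ n))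
      (by simpa using hn1.symm) fun i h1 h2 => by simp_all [unitSeq]]
    norm_num [unitSeq, hn1, hn1.symm]
  · have hn1 : n ≠ 1 := by omega
    have hn2 : n ≠ 2 := by omega
    rw [baernsteinNorm_eq_sqrt (BAdmissible.pair le_rfl (by omega : 2 ≤ n))
      (by simpa using hn1.symm) fun i h1 h2 => by simp_all [unitSeq]]
    simp only [unitSeq, sum_pair hn2.symm]
    norm_num [hn1, hn1.symm, hn2, hn2.symm, abs_of_pos]
    congr 1
    field_simp
    linear_combination (-1 - 2 * Real.sqrt 2) * hsq
  · exact (Real.sqrt_lt_sqrt zero_le_two (lt_add_of_pos_right 2 (by positivity))).ne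
end

section
/- Let ‖·‖ be a norm on c₀₀ satisfying the Figiel–Johnson implicit equation (a Tsirelson norm). Then ‖ξ‖ ≤ ‖ξ‖₁ (the ℓ₁-norm) for every ξ ∈ c₀₀, and for every finite set F ⊂ {1,2,...} with 2 ≤ |F| ≤ min F one has ‖∑_{i∈F} e_i‖ = |F|/2. -/
open Filter Topology

/-- The coordinatewise restriction of a finitely supported sequence to a finite index set. -/
noncomputable def restrF (E : Finset ℕ) (ξ : ℕ →₀ ℝ) : ℕ →₀ ℝ :=
  Finsupp.filter (· ∈ E) ξ

/-- The sup-norm of a finitely supported sequence. -/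
noncomputable def supNormF (ξ : ℕ →₀ ℝ) : ℝ := ⨆ i, |ξ i|

/-- The set of values appearing in the inner supremum of the Figiel–Johnson implicit
equation: all numbers `(1/2) ∑_{j<k} ‖E_j ξ‖` over chains `E 0 < ... < E (k-1)` of
nonempty finite sets with `k ≤ min (E 0)`. -/
def tsirelsonSet (nrm : (ℕ →₀ ℝ) → ℝ) (ξ : ℕ →₀ ℝ) : Set ℝ :=
  {r | ∃ (k : ℕ) (E : ℕ → Finset ℕ), 1 ≤ k ∧
    (∀ j < k, (E j).Nonempty) ∧
    (∀ j, j + 1 < k → ∀ a ∈ E j, ∀ b ∈ E (j + 1), a < b) ∧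
    (∀ i ∈ E 0, k ≤ i) ∧
    r = (1 / 2) * ∑ j ∈ Finset.range k, nrm (restrF (E j) ξ)}

/-- `nrm` is a norm on `c₀₀` satisfying the Figiel–Johnson implicit equation. -/
def IsTsirelsonNorm (nrm : (ℕ →₀ ℝ) → ℝ) : Prop :=
  (∀ ξ η, nrm (ξ + η) ≤ nrm ξ + nrm η) ∧
  (∀ (c : ℝ) (ξ), nrm (c • ξ) = |c| * nrm ξ) ∧
  (∀ ξ, nrm ξ = 0 ↔ ξ = 0) ∧
  (∀ ξ, nrm ξ = max (supNormF ξ) (sSup (tsirelsonSet nrm ξ)))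

namespace TsirelsonAux

noncomputable def l1 (ξ : ℕ →₀ ℝ) : ℝ := ∑ i ∈ ξ.support, |ξ i|

lemma l1_nonneg (ξ : ℕ →₀ ℝ) : 0 ≤ l1 ξ :=
  Finset.sum_nonneg fun _ _ => abs_nonneg _

lemma abs_le_l1 (ξ : ℕ →₀ ℝ) (i : ℕ) : |ξ i| ≤ l1 ξ := by
  by_cases hi : i ∈ ξ.support
  · exact Finset.single_le_sum (f := fun j => |ξ j|) (fun j _ => abs_nonneg _) hi
  · rw [Finsupp.notMem_support_iff.1 hi]
    simpa using l1_nonneg ξ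

lemma supNorm_le_l1 (ξ : ℕ →₀ ℝ) : supNormF ξ ≤ l1 ξ := ciSup_le (abs_le_l1 ξ)

lemma bdd_range (ξ : ℕ →₀ ℝ) : BddAbove (Set.range fun i => |ξ i|) :=
  ⟨l1 ξ, by rintro x ⟨i, rfl⟩; exact abs_le_l1 ξ i⟩

lemma abs_le_supNorm (ξ : ℕ →₀ ℝ) (i : ℕ) : |ξ i| ≤ supNormF ξ :=
  le_ciSup (bdd_range ξ) i

lemma restr_apply (E : Finset ℕ) (ξ : ℕ →₀ ℝ) (i : ℕ) :
    restrF E ξ i = if i ∈ E then ξ i else 0 := Finsupp.filter_apply _ ξ i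

lemma restr_support (E : Finset ℕ) (ξ : ℕ →₀ ℝ) :
    (restrF E ξ).support = ξ.support.filter (fun i => i ∈ E) :=
  Finsupp.support_filter _ ξ

lemma l1_restr (E : Finset ℕ) (ξ : ℕ →₀ ℝ) :
    l1 (restrF E ξ) = ∑ i ∈ ξ.support, if i ∈ E then |ξ i| else 0 := by
  rw [l1, restr_support, Finset.sum_filter]
  apply Finset.sum_congr rfl
  intro i _
  by_cases hiE : i ∈ E <;> simp [restr_apply, hiE]

section Chain

variable {k : ℕ} {E : ℕ → Finset ℕ}
  (hne : ∀ j < k, (E j).Nonempty)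
  (hord : ∀ j, j + 1 < k → ∀ a ∈ E j, ∀ b ∈ E (j + 1), a < b)

include hne hord in
lemma chain_lt : ∀ (d j : ℕ), j + d + 1 < k → ∀ a ∈ E j, ∀ b ∈ E (j + d + 1), a < b := by
  intro d
  induction d with
  | zero => intro j hj a ha b hb; exact hord j hj a ha b hb
  | succ d ih =>
    intro j hj a ha b hb
    obtain ⟨c, hc⟩ := hne (j + d + 1) (by omega)
    have h1 : a < c := ih j (by omega) a ha c hc
    have h2 : c < b := by
      have := hord (j + d + 1) (by omega) c hc b
      rw [show j + d + 1 + 1 = j + (d + 1) + 1 by ring] at this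
      exact this hb
    exact h1.trans h2

include hne hord in
lemma chain_lt' : ∀ (j j' : ℕ), j < j' → j' < k → ∀ a ∈ E j, ∀ b ∈ E j', a < b := by
  intro j j' hjj hj' a ha b hb
  obtain ⟨d, rfl⟩ : ∃ d, j' = j + d + 1 := ⟨j' - j - 1, by omega⟩
  exact chain_lt hne hord d j hj' a ha b hb

include hne hord in
lemma chain_disjoint {j j' : ℕ} (hjj : j ≠ j') (hj : j < k) (hj' : j' < k) {i : ℕ}
    (hi : i ∈ E j) (hi' : i ∈ E j') : False := by
  rcases lt_or_gt_of_ne hjj with hlt | hlt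
  · exact lt_irrefl i (chain_lt' hne hord j j' hlt hj' i hi i hi')
  · exact lt_irrefl i (chain_lt' hne hord j' j hlt hj i hi' i hi)

include hne hord in
lemma sum_l1_restr_le (ξ : ℕ →₀ ℝ) :
    ∑ j ∈ Finset.range k, l1 (restrF (E j) ξ) ≤ l1 ξ := by
  calc ∑ j ∈ Finset.range k, l1 (restrF (E j) ξ)
      = ∑ j ∈ Finset.range k, ∑ i ∈ ξ.support, (if i ∈ E j then |ξ i| else 0) := by
        exact Finset.sum_congr rfl fun j _ => l1_restr _ _
    _ = ∑ i ∈ ξ.support, ∑ j ∈ Finset.range k, (if i ∈ E j then |ξ i| else 0) :=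
        Finset.sum_comm
    _ ≤ ∑ i ∈ ξ.support, |ξ i| := by
        apply Finset.sum_le_sum
        intro i _
        rw [← Finset.sum_filter]
        have hcard : ((Finset.range k).filter (fun j => i ∈ E j)).card ≤ 1 := by
          apply Finset.card_le_one.2
          intro a ha b hb
          simp only [Finset.mem_filter, Finset.mem_range] at ha hb
          by_contra hab
          exact chain_disjoint hne hord hab ha.1 hb.1 ha.2 hb.2
        rw [Finset.sum_const, nsmul_eq_mul]
        calc (((Finset.range k).filter (fun j => i ∈ E j)).card : ℝ) * |ξ i|
            ≤ 1 * |ξ i| := by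
              apply mul_le_mul_of_nonneg_right _ (abs_nonneg _)
              exact_mod_cast hcard
          _ = |ξ i| := one_mul _

end Chain


section Main

variable {nrm : (ℕ →₀ ℝ) → ℝ}

lemma nrm_zero (h : IsTsirelsonNorm nrm) : nrm 0 = 0 := (h.2.2.1 0).2 rfl

lemma nrm_le_l1_aux (h : IsTsirelsonNorm nrm) :
    ∀ n (ξ : ℕ →₀ ℝ), ξ.support.card ≤ n → nrm ξ ≤ l1 ξ := by
  intro n
  induction n with
  | zero =>
    intro ξ hξ
    have hz : ξ = 0 :=
      Finsupp.support_eq_empty.1 (Finset.card_eq_zero.1 (Nat.le_zero.1 hξ))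
    rw [hz, nrm_zero h]; exact l1_nonneg 0
  | succ n ih =>
    intro ξ hξ
    set M := max ((1/2) * nrm ξ) (l1 ξ) with hM
    have hM0 : 0 ≤ M := le_trans (l1_nonneg ξ) (le_max_right _ _)
    have hbound : ∀ r ∈ tsirelsonSet nrm ξ, r ≤ M := by
      rintro r ⟨k, E, hk, hne, hord, hmin, rfl⟩
      by_cases hcase : ∃ j < k, ξ.support ⊆ E j
      · obtain ⟨j, hj, hsub⟩ := hcase
        have hrj : restrF (E j) ξ = ξ := by
          ext i
          rw [restr_apply]
          by_cases hi : i ∈ E j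
          · rw [if_pos hi]
          · rw [if_neg hi]
            exact (Finsupp.notMem_support_iff.1 fun hmem => hi (hsub hmem)).symm
        have hzero' : ∀ j' ∈ Finset.range k, j' ≠ j → nrm (restrF (E j') ξ) = 0 := by
          intro j' hj' hne'
          have hr0 : restrF (E j') ξ = 0 := by
            ext i
            rw [restr_apply]
            by_cases hi : i ∈ E j'
            · rw [if_pos hi]
              by_contra h0
              have hmem : i ∈ ξ.support := Finsupp.mem_support_iff.2 (by simpa using h0)
              exact chain_disjoint hne hord hne' (Finset.mem_range.1 hj') hj hi (hsub hmem)
            · rw [if_neg hi]; simp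
          rw [hr0, nrm_zero h]
        have hsum : ∑ j' ∈ Finset.range k, nrm (restrF (E j') ξ) = nrm ξ := by
          rw [Finset.sum_eq_single j hzero'
            (fun hj0 => absurd (Finset.mem_range.2 hj) hj0), hrj]
        rw [hsum]; exact le_max_left _ _
      · push_neg at hcase
        have hle : ∀ j ∈ Finset.range k, nrm (restrF (E j) ξ) ≤ l1 (restrF (E j) ξ) := by
          intro j hj
          apply ih
          have hsub : (restrF (E j) ξ).support ⊆ ξ.support := by
            rw [restr_support]; exact Finset.filter_subset _ _
          have hssub : (restrF (E j) ξ).support ⊂ ξ.support := by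
            refine ⟨hsub, fun hcontra => ?_⟩
            apply hcase j (Finset.mem_range.1 hj)
            intro i hi
            have hx := hcontra hi
            rw [restr_support, Finset.mem_filter] at hx
            exact hx.2
          have := Finset.card_lt_card hssub
          omega
        calc (1/2 : ℝ) * ∑ j ∈ Finset.range k, nrm (restrF (E j) ξ)
            ≤ (1/2) * ∑ j ∈ Finset.range k, l1 (restrF (E j) ξ) :=
              mul_le_mul_of_nonneg_left (Finset.sum_le_sum hle) (by norm_num)
          _ ≤ (1/2) * l1 ξ :=
              mul_le_mul_of_nonneg_left (sum_l1_restr_le hne hord ξ) (by norm_num)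
          _ ≤ l1 ξ := by linarith [l1_nonneg ξ]
          _ ≤ M := le_max_right _ _
    have hmain : nrm ξ ≤ M := by
      rw [h.2.2.2 ξ]
      exact max_le (le_trans (supNorm_le_l1 ξ) (le_max_right _ _)) (Real.sSup_le hbound hM0)
    rcases max_choice ((1/2 : ℝ) * nrm ξ) (l1 ξ) with hc | hc <;> rw [← hM] at hc <;>
      rw [hc] at hmain
    · linarith [l1_nonneg ξ]
    · exact hmain

lemma nrm_le_l1 (h : IsTsirelsonNorm nrm) (ξ : ℕ →₀ ℝ) : nrm ξ ≤ l1 ξ :=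
  nrm_le_l1_aux h ξ.support.card ξ le_rfl

lemma tsSet_le (h : IsTsirelsonNorm nrm) (ξ : ℕ →₀ ℝ) :
    ∀ r ∈ tsirelsonSet nrm ξ, r ≤ (1/2) * l1 ξ := by
  rintro r ⟨k, E, hk, hne, hord, hmin, rfl⟩
  calc (1/2 : ℝ) * ∑ j ∈ Finset.range k, nrm (restrF (E j) ξ)
      ≤ (1/2) * ∑ j ∈ Finset.range k, l1 (restrF (E j) ξ) :=
        mul_le_mul_of_nonneg_left
          (Finset.sum_le_sum fun j _ => nrm_le_l1 h _) (by norm_num)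
    _ ≤ (1/2) * l1 ξ :=
        mul_le_mul_of_nonneg_left (sum_l1_restr_le hne hord ξ) (by norm_num)

end Main


lemma xiF_apply (F : Finset ℕ) (j : ℕ) :
    (∑ i ∈ F, Finsupp.single i (1:ℝ)) j = if j ∈ F then 1 else 0 := by
  rw [Finsupp.finset_sum_apply]
  simp only [Finsupp.single_apply]
  simp

lemma xiF_support (F : Finset ℕ) : (∑ i ∈ F, Finsupp.single i (1:ℝ)).support = F := by
  ext j
  rw [Finsupp.mem_support_iff, xiF_apply]
  split_ifs with hj <;> simp [hj]

lemma xiF_l1 (F : Finset ℕ) : l1 (∑ i ∈ F, Finsupp.single i (1:ℝ)) = F.card := by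
  rw [l1, xiF_support]
  have habs : ∀ i ∈ F, |(∑ i ∈ F, Finsupp.single i (1:ℝ)) i| = 1 := fun i hi => by
    rw [xiF_apply, if_pos hi, abs_one]
  rw [Finset.sum_congr rfl habs, Finset.sum_const, nsmul_eq_mul, mul_one]

lemma restr_single_xiF (F : Finset ℕ) {a : ℕ} (ha : a ∈ F) :
    restrF {a} (∑ i ∈ F, Finsupp.single i (1:ℝ)) = Finsupp.single a 1 := by
  ext j
  rw [restr_apply, xiF_apply, Finsupp.single_apply]
  by_cases hj : j = a
  · subst hj; simp [ha]
  · simp [hj, Ne.symm hj]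

lemma nrm_single_one {nrm : (ℕ →₀ ℝ) → ℝ} (h : IsTsirelsonNorm nrm) (a : ℕ) :
    nrm (Finsupp.single a (1:ℝ)) = 1 := by
  apply le_antisymm
  · have := nrm_le_l1 h (Finsupp.single a (1:ℝ))
    rwa [l1, Finsupp.support_single_ne_zero a one_ne_zero, Finset.sum_singleton,
      Finsupp.single_eq_same, abs_one] at this
  · rw [h.2.2.2]
    refine le_trans ?_ (le_max_left _ _)
    have := abs_le_supNorm (Finsupp.single a (1:ℝ)) a
    rwa [Finsupp.single_eq_same, abs_one] at this

end TsirelsonAux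

open TsirelsonAux in
theorem tsirelson_le_l1_and_block_norm (nrm : (ℕ →₀ ℝ) → ℝ) (h : IsTsirelsonNorm nrm) :
    (∀ ξ : ℕ →₀ ℝ, nrm ξ ≤ ∑ i ∈ ξ.support, |ξ i|) ∧
    (∀ F : Finset ℕ, 2 ≤ F.card → (∀ i ∈ F, F.card ≤ i) →
      nrm (∑ i ∈ F, Finsupp.single i (1 : ℝ)) = (F.card : ℝ) / 2) := by
  constructor
  · exact fun ξ => nrm_le_l1 h ξ
  · intro F hcard hmin
    set ξF := ∑ i ∈ F, Finsupp.single i (1:ℝ) with hξF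
    have hl1 : l1 ξF = F.card := xiF_l1 F
    have hk1 : 1 ≤ F.card := by omega
    set emb := F.orderEmbOfFin (rfl : F.card = F.card) with hemb
    set E : ℕ → Finset ℕ := fun j => if hj : j < F.card then {emb ⟨j, hj⟩} else {0} with hE
    have hEj : ∀ j (hj : j < F.card), E j = {emb ⟨j, hj⟩} := fun j hj => dif_pos hj
    have hmem : (F.card:ℝ)/2 ∈ tsirelsonSet nrm ξF := by
      refine ⟨F.card, E, hk1, ?_, ?_, ?_, ?_⟩
      · intro j hj
        rw [hEj j hj]; exact Finset.singleton_nonempty _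
      · intro j hj a ha b hb
        rw [hEj j (by omega), Finset.mem_singleton] at ha
        rw [hEj (j+1) hj, Finset.mem_singleton] at hb
        subst ha; subst hb
        exact emb.strictMono (by simp [Fin.lt_def])
      · intro i hi
        rw [hEj 0 (by omega), Finset.mem_singleton] at hi
        subst hi
        exact hmin _ (Finset.orderEmbOfFin_mem F rfl _)
      · have hterm : ∀ j ∈ Finset.range F.card, nrm (restrF (E j) ξF) = 1 := by
          intro j hj
          have hjc := Finset.mem_range.1 hj
          rw [hEj j hjc, hξF, restr_single_xiF F (Finset.orderEmbOfFin_mem F rfl _),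
            nrm_single_one h]
        rw [Finset.sum_congr rfl hterm, Finset.sum_const, Finset.card_range,
          nsmul_eq_mul, mul_one]
        ring
    have hbdd : BddAbove (tsirelsonSet nrm ξF) :=
      ⟨(1/2) * l1 ξF, fun r hr => tsSet_le h ξF r hr⟩
    apply le_antisymm
    · rw [h.2.2.2 ξF]
      have h2le : (2:ℝ) ≤ F.card := by exact_mod_cast hcard
      apply max_le
      · have h1 : supNormF ξF ≤ 1 := ciSup_le fun i => by
          rw [hξF, xiF_apply]; split_ifs <;> simp
        linarith
      · have hsup := Real.sSup_le (tsSet_le h ξF)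
          (by rw [hl1]; positivity)
        rw [hl1] at hsup; linarith
    · calc (F.card:ℝ)/2 ≤ sSup (tsirelsonSet nrm ξF) := le_csSup hbdd hmem
        _ ≤ max (supNormF ξF) (sSup (tsirelsonSet nrm ξF)) := le_max_right _ _
        _ = nrm ξF := (h.2.2.2 ξF).symm
end

section
/- Let ‖·‖ be a norm on c₀₀ satisfying the Figiel–Johnson implicit equation. Let N ≥ 1, k ≥ 1, and 2 ≤ m ≤ N + k, and set F = {N+k+1, …, N+k+m}. Then for every x₀ ∈ c₀₀ supported in {1,…,N}, every α > 0, and both choices of sign, ‖x₀ ± α ∑_{i∈F} e_i‖ ≤ max{ mα/2 , ‖x₀‖ + α(2N + m)/4 }. -/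
open Filter Topology

-- basic facts
lemma bdd_abs (ξ : ℕ →₀ ℝ) : BddAbove (Set.range fun i => |ξ i|) := by
  have : (Set.range fun i => |ξ i|) ⊆ insert 0 ((fun i => |ξ i|) '' ξ.support) := by
    rintro r ⟨i, rfl⟩
    by_cases hi : i ∈ ξ.support
    · exact Set.mem_insert_of_mem _ ⟨i, hi, rfl⟩
    · simp [Finsupp.notMem_support_iff.mp hi]
  exact (((ξ.support.finite_toSet.image _).insert 0).subset this).bddAbove

lemma abs_le_supNorm (ξ : ℕ →₀ ℝ) (i : ℕ) : |ξ i| ≤ supNormF ξ :=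
  le_ciSup (bdd_abs ξ) i

lemma supNorm_le (ξ : ℕ →₀ ℝ) {c : ℝ} (hc : ∀ i, |ξ i| ≤ c) : supNormF ξ ≤ c :=
  ciSup_le hc

variable {nrm : (ℕ →₀ ℝ) → ℝ}

lemma nrm_zero (h : IsTsirelsonNorm nrm) : nrm 0 = 0 := (h.2.2.1 0).2 rfl

lemma supNorm_le_nrm (h : IsTsirelsonNorm nrm) (ξ : ℕ →₀ ℝ) : supNormF ξ ≤ nrm ξ := by
  rw [h.2.2.2 ξ]; exact le_max_left _ _

lemma nrm_nonneg (h : IsTsirelsonNorm nrm) (ξ : ℕ →₀ ℝ) : 0 ≤ nrm ξ :=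
  le_trans (le_trans (abs_nonneg (ξ 0)) (abs_le_supNorm ξ 0)) (supNorm_le_nrm h ξ)

lemma nrm_finset_sum_le (h : IsTsirelsonNorm nrm) {ι : Type*} (s : Finset ι) (f : ι → (ℕ →₀ ℝ)) :
    nrm (∑ i ∈ s, f i) ≤ ∑ i ∈ s, nrm (f i) := by
  classical
  induction s using Finset.cons_induction with
  | empty => simp [nrm_zero h]
  | cons a s ha ih =>
    rw [Finset.sum_cons, Finset.sum_cons]
    exact le_trans (h.1 _ _) (by linarith)

lemma chain_lt {l : ℕ} {E : ℕ → Finset ℕ}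
    (hne : ∀ j < l, (E j).Nonempty)
    (hlt : ∀ j, j + 1 < l → ∀ a ∈ E j, ∀ b ∈ E (j + 1), a < b) :
    ∀ d j₁, j₁ + d + 1 < l → ∀ a ∈ E j₁, ∀ b ∈ E (j₁ + d + 1), a < b := by
  intro d
  induction d with
  | zero => exact fun j₁ hj => hlt j₁ hj
  | succ d ih =>
    intro j₁ hj a ha b hb
    obtain ⟨c, hc⟩ := hne (j₁ + 1) (by omega)
    have h1 : a < c := hlt j₁ (by omega) a ha c hc
    have h2 : c < b := by
      have := ih (j₁ + 1) (by omega) c hc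
      have hb' : b ∈ E (j₁ + 1 + d + 1) := by
        have : j₁ + 1 + d + 1 = j₁ + (d + 1) + 1 := by omega
        rw [this]; exact hb
      exact ih (j₁ + 1) (by omega) c hc b hb'
    omega

lemma chain_lt' {l : ℕ} {E : ℕ → Finset ℕ}
    (hne : ∀ j < l, (E j).Nonempty)
    (hlt : ∀ j, j + 1 < l → ∀ a ∈ E j, ∀ b ∈ E (j + 1), a < b) :
    ∀ j₁ j₂, j₁ < j₂ → j₂ < l → ∀ a ∈ E j₁, ∀ b ∈ E j₂, a < b := by
  intro j₁ j₂ h12 h2 a ha b hb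
  obtain ⟨d, rfl⟩ : ∃ d, j₂ = j₁ + d + 1 := ⟨j₂ - j₁ - 1, by omega⟩
  exact chain_lt hne hlt d j₁ h2 a ha b hb

lemma chain_disjoint {l : ℕ} {E : ℕ → Finset ℕ}
    (hne : ∀ j < l, (E j).Nonempty)
    (hlt : ∀ j, j + 1 < l → ∀ a ∈ E j, ∀ b ∈ E (j + 1), a < b) :
    ∀ j₁ j₂, j₁ < l → j₂ < l → j₁ ≠ j₂ → Disjoint (E j₁) (E j₂) := by
  intro j₁ j₂ h1 h2 hne12
  rw [Finset.disjoint_left]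
  intro a ha1 ha2
  rcases Nat.lt_or_ge j₁ j₂ with hlt' | hge
  · exact absurd (chain_lt' hne hlt j₁ j₂ hlt' h2 a ha1 a ha2) (lt_irrefl a)
  · have : j₂ < j₁ := by omega
    exact absurd (chain_lt' hne hlt j₂ j₁ this h1 a ha2 a ha1) (lt_irrefl a)

lemma nrm_single_one_le (h : IsTsirelsonNorm nrm) (i : ℕ) :
    nrm (Finsupp.single i (1:ℝ)) ≤ 1 := by
  set e := Finsupp.single i (1:ℝ) with he
  set t := nrm e with ht
  have ht0 : 0 ≤ t := nrm_nonneg h e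
  have hsup : supNormF e ≤ 1 := by
    apply supNorm_le
    intro j
    rw [he, Finsupp.single_apply]
    split <;> simp
  have hS : ∀ r ∈ tsirelsonSet nrm e, r ≤ t / 2 := by
    rintro r ⟨l, E, hl, hne, hlt, _, rfl⟩
    have key : ∑ j ∈ Finset.range l, nrm (restrF (E j) e) ≤ t := by
      have hbound : ∀ j ∈ Finset.range l,
          nrm (restrF (E j) e) ≤ if i ∈ E j then t else 0 := by
        intro j _
        by_cases hij : i ∈ E j
        · simp only [hij, if_true]
          rw [restrF, he, Finsupp.filter_single_of_pos _ hij]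
        · simp only [hij, if_false]
          rw [restrF, he, Finsupp.filter_single_of_neg _ hij, nrm_zero h]
      refine le_trans (Finset.sum_le_sum hbound) ?_
      rw [Finset.sum_ite, Finset.sum_const_zero, add_zero, Finset.sum_const]
      have hcard : ((Finset.range l).filter (fun j => i ∈ E j)).card ≤ 1 := by
        rw [Finset.card_le_one]
        intro j₁ hj₁ j₂ hj₂
        simp only [Finset.mem_filter, Finset.mem_range] at hj₁ hj₂
        by_contra hne12
        exact (Finset.disjoint_left.mp
          (chain_disjoint hne hlt j₁ j₂ hj₁.1 hj₂.1 hne12) hj₁.2) hj₂.2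
      calc (((Finset.range l).filter (fun j => i ∈ E j)).card : ℕ) • t
          ≤ 1 • t := by
            apply smul_le_smul_of_nonneg_right _ ht0
            exact_mod_cast hcard
        _ = t := one_smul _ _
    calc (1/2 : ℝ) * ∑ j ∈ Finset.range l, nrm (restrF (E j) e)
        ≤ (1/2) * t := by linarith
      _ = t / 2 := by ring
  by_contra hgt
  push_neg at hgt
  have hsS : sSup (tsirelsonSet nrm e) ≤ t / 2 := Real.sSup_le hS (by linarith)
  have hmax : t ≤ max 1 (t/2) := by
    calc t = max (supNormF e) (sSup (tsirelsonSet nrm e)) := h.2.2.2 e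
      _ ≤ max 1 (t/2) := max_le_max hsup hsS
  rcases le_max_iff.mp hmax with h1 | h2 <;> linarith

lemma nrm_single_le (h : IsTsirelsonNorm nrm) (i : ℕ) (c : ℝ) :
    nrm (Finsupp.single i c) ≤ |c| := by
  have : Finsupp.single i c = c • Finsupp.single i (1:ℝ) := by
    rw [Finsupp.smul_single, smul_eq_mul, mul_one]
  rw [this, h.2.1]
  calc |c| * nrm (Finsupp.single i (1:ℝ)) ≤ |c| * 1 :=
        mul_le_mul_of_nonneg_left (nrm_single_one_le h i) (abs_nonneg c)
    _ = |c| := mul_one _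

lemma nrm_le_l1 (h : IsTsirelsonNorm nrm) (ξ : ℕ →₀ ℝ) :
    nrm ξ ≤ ∑ i ∈ ξ.support, |ξ i| := by
  conv_lhs => rw [← Finsupp.sum_single ξ]
  refine le_trans (nrm_finset_sum_le h _ _) ?_
  exact Finset.sum_le_sum fun i _ => nrm_single_le h i (ξ i)

lemma restr_support (E : Finset ℕ) (ξ : ℕ →₀ ℝ) :
    (restrF E ξ).support = ξ.support.filter (· ∈ E) := by
  rw [restrF, Finsupp.support_filter]

lemma restr_apply (E : Finset ℕ) (ξ : ℕ →₀ ℝ) (i : ℕ) :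
    restrF E ξ i = if i ∈ E then ξ i else 0 := rfl

lemma chain_sum_le (h : IsTsirelsonNorm nrm) (ξ : ℕ →₀ ℝ) {l : ℕ} {E : ℕ → Finset ℕ}
    (hne : ∀ j < l, (E j).Nonempty)
    (hlt : ∀ j, j + 1 < l → ∀ a ∈ E j, ∀ b ∈ E (j + 1), a < b) :
    ∑ j ∈ Finset.range l, nrm (restrF (E j) ξ) ≤ ∑ i ∈ ξ.support, |ξ i| := by
  classical
  have hstep : ∀ j ∈ Finset.range l,
      nrm (restrF (E j) ξ) ≤ ∑ i ∈ ξ.support.filter (· ∈ E j), |ξ i| := by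
    intro j _
    refine le_trans (nrm_le_l1 h _) ?_
    rw [restr_support]
    apply Finset.sum_le_sum
    intro i hi
    rw [restr_apply]
    simp only [Finset.mem_filter] at hi
    rw [if_pos hi.2]
  refine le_trans (Finset.sum_le_sum hstep) ?_
  rw [← Finset.sum_biUnion]
  · apply Finset.sum_le_sum_of_subset_of_nonneg
    · intro i hi
      simp only [Finset.mem_biUnion, Finset.mem_filter] at hi
      obtain ⟨j, _, hji, _⟩ := hi
      exact hji
    · intro i _ _; exact abs_nonneg _
  · intro j₁ hj₁ j₂ hj₂ hne12
    simp only [Finset.mem_coe, Finset.mem_range] at hj₁ hj₂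
    apply Finset.disjoint_left.mpr
    intro a ha1 ha2
    simp only [Finset.mem_filter] at ha1 ha2
    exact Finset.disjoint_left.mp (chain_disjoint hne hlt j₁ j₂ hj₁ hj₂ hne12) ha1.2 ha2.2

lemma tsirelson_elem_le (h : IsTsirelsonNorm nrm) (ξ : ℕ →₀ ℝ) {r : ℝ}
    (hr : r ∈ tsirelsonSet nrm ξ) : r ≤ nrm ξ := by
  have hbdd : BddAbove (tsirelsonSet nrm ξ) := by
    refine ⟨(1/2) * ∑ i ∈ ξ.support, |ξ i|, ?_⟩
    rintro r ⟨l, E, hl, hne, hlt, _, rfl⟩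
    have := chain_sum_le h ξ hne hlt
    linarith
  calc r ≤ sSup (tsirelsonSet nrm ξ) := le_csSup hbdd hr
    _ ≤ nrm ξ := by rw [h.2.2.2 ξ]; exact le_max_right _ _

noncomputable def indF (G : Finset ℕ) : ℕ →₀ ℝ := ∑ i ∈ G, Finsupp.single i 1

lemma indF_apply (G : Finset ℕ) (j : ℕ) : indF G j = if j ∈ G then 1 else 0 := by
  rw [indF, Finsupp.finset_sum_apply]
  simp [Finsupp.single_apply]

lemma indF_support (G : Finset ℕ) : (indF G).support ⊆ G := by
  intro i hi
  rw [Finsupp.mem_support_iff, indF_apply] at hi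
  by_contra hiG
  rw [if_neg hiG] at hi
  exact hi rfl

lemma restr_add (E : Finset ℕ) (ξ η : ℕ →₀ ℝ) :
    restrF E (ξ + η) = restrF E ξ + restrF E η := by
  simp [restrF, Finsupp.filter_add]

lemma restr_smul (E : Finset ℕ) (c : ℝ) (ξ : ℕ →₀ ℝ) :
    restrF E (c • ξ) = c • restrF E ξ := by
  simp [restrF, Finsupp.filter_smul]

lemma restr_indF (E G : Finset ℕ) :
    restrF E (indF G) = indF (G.filter (· ∈ E)) := by
  classical
  rw [restrF, indF, Finsupp.filter_sum, indF, Finset.sum_filter]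
  apply Finset.sum_congr rfl
  intro i _
  by_cases hiE : i ∈ E
  · rw [Finsupp.filter_single_of_pos _ hiE, if_pos hiE]
  · rw [Finsupp.filter_single_of_neg _ hiE, if_neg hiE]

lemma l1_indF_le (G : Finset ℕ) : ∑ i ∈ (indF G).support, |indF G i| ≤ (G.card : ℝ) := by
  calc ∑ i ∈ (indF G).support, |indF G i| ≤ ∑ _i ∈ (indF G).support, (1:ℝ) := by
        apply Finset.sum_le_sum
        intro i _
        rw [indF_apply]
        split <;> simp
    _ = ((indF G).support.card : ℝ) := by simp
    _ ≤ (G.card : ℝ) := by exact_mod_cast Finset.card_le_card (indF_support G)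

lemma nrm_indF_le {nrm : (ℕ →₀ ℝ) → ℝ} (h : IsTsirelsonNorm nrm) (G : Finset ℕ) :
    nrm (indF G) ≤ max 1 ((G.card : ℝ) / 2) := by
  have hsup : supNormF (indF G) ≤ 1 := by
    apply supNorm_le
    intro j
    rw [indF_apply]
    split <;> simp
  have hS : ∀ r ∈ tsirelsonSet nrm (indF G), r ≤ (G.card : ℝ) / 2 := by
    rintro r ⟨l, E, hl, hne, hlt, _, rfl⟩
    have h1 := chain_sum_le h (indF G) hne hlt
    have h2 := l1_indF_le G
    calc (1/2 : ℝ) * ∑ j ∈ Finset.range l, nrm (restrF (E j) (indF G))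
        ≤ (1/2) * (G.card : ℝ) := by linarith
      _ = (G.card : ℝ) / 2 := by ring
  have hsS : sSup (tsirelsonSet nrm (indF G)) ≤ (G.card : ℝ) / 2 :=
    Real.sSup_le hS (by positivity)
  calc nrm (indF G) = max (supNormF (indF G)) (sSup (tsirelsonSet nrm (indF G))) :=
        h.2.2.2 _
    _ ≤ max 1 ((G.card : ℝ) / 2) := max_le_max hsup hsS


theorem tsirelson_perturbation_estimate (nrm : (ℕ →₀ ℝ) → ℝ) (h : IsTsirelsonNorm nrm)
    (N k m : ℕ) (hN : 1 ≤ N) (hk : 1 ≤ k) (hm2 : 2 ≤ m) (hm : m ≤ N + k)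
    (x₀ : ℕ →₀ ℝ) (hsupp : x₀.support ⊆ Finset.Icc 1 N)
    (α : ℝ) (hα : 0 < α) (σ : ℝ) (hσ : σ = 1 ∨ σ = -1) :
    nrm (x₀ + (σ * α) • ∑ i ∈ Finset.Icc (N + k + 1) (N + k + m), Finsupp.single i (1 : ℝ))
      ≤ max ((m : ℝ) * α / 2) (nrm x₀ + α * (2 * (N : ℝ) + m) / 4) := by
  classical
  set F := Finset.Icc (N + k + 1) (N + k + m) with hF
  have hrw : (∑ i ∈ F, Finsupp.single i (1:ℝ)) = indF F := rfl
  rw [hrw]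
  set y := (σ * α) • indF F with hy
  set z := x₀ + y with hz
  set RHS := max ((m : ℝ) * α / 2) (nrm x₀ + α * (2 * (N : ℝ) + m) / 4) with hRHS
  have habs : |σ * α| = α := by
    rcases hσ with rfl | rfl <;> simp [abs_of_pos hα]
  have hcardF : F.card = m := by
    rw [hF, Nat.card_Icc]; omega
  have hx0F : ∀ i, N < i → x₀ i = 0 := by
    intro i hi
    by_contra hne
    have := hsupp (Finsupp.mem_support_iff.mpr hne)
    rw [Finset.mem_Icc] at this
    omega
  have hyi : ∀ i, y i = (σ * α) * indF F i := fun i => rfl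
  have hyabs : ∀ i, |y i| ≤ α := by
    intro i
    rw [hyi, abs_mul, habs, indF_apply]
    split <;> simp [le_of_lt hα, hα.le]
  have hysupp : y.support ⊆ F := by
    intro i hi
    rw [Finsupp.mem_support_iff, hyi] at hi
    by_contra hiF
    rw [indF_apply, if_neg hiF, mul_zero] at hi
    exact hi rfl
  have hRHS1 : α ≤ (m : ℝ) * α / 2 := by
    have : (2:ℝ) ≤ m := by exact_mod_cast hm2
    nlinarith
  have hRHS0 : (0:ℝ) ≤ RHS :=
    le_max_of_le_left (by positivity)
  -- l1 norm of y
  have hl1y : ∑ i ∈ y.support, |y i| ≤ (m : ℝ) * α := by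
    calc ∑ i ∈ y.support, |y i| ≤ ∑ _i ∈ y.support, α :=
          Finset.sum_le_sum fun i _ => hyabs i
      _ = (y.support.card : ℝ) * α := by rw [Finset.sum_const, nsmul_eq_mul]
      _ ≤ (m : ℝ) * α := by
          apply mul_le_mul_of_nonneg_right _ hα.le
          have := Finset.card_le_card hysupp
          rw [hcardF] at this
          exact_mod_cast this
  -- sup norm bound
  have hsupz : supNormF z ≤ RHS := by
    apply supNorm_le
    intro i
    by_cases hiF : i ∈ F
    · have hx0 : x₀ i = 0 := by
        apply hx0F
        rw [hF, Finset.mem_Icc] at hiF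
        omega
      have : z i = y i := by
        show x₀ i + y i = y i
        rw [hx0, zero_add]
      rw [this]
      exact le_trans (hyabs i) (le_trans hRHS1 (le_max_left _ _))
    · have hy0 : y i = 0 := by
        rw [hyi, indF_apply, if_neg hiF, mul_zero]
      have hzi : z i = x₀ i := by
        show x₀ i + y i = x₀ i
        rw [hy0, add_zero]
      rw [hzi]
      refine le_trans (le_trans (abs_le_supNorm x₀ i) (supNorm_le_nrm h x₀)) ?_
      refine le_max_of_le_right ?_
      have : (0:ℝ) ≤ α * (2 * (N : ℝ) + m) / 4 := by positivity
      linarith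
  -- sSup bound
  have hsSup : ∀ r ∈ tsirelsonSet nrm z, r ≤ RHS := by
    rintro r ⟨l, E, hl, hne, hlt, hmin, rfl⟩
    set G : ℕ → Finset ℕ := fun j => F.filter (· ∈ E j) with hG
    have hrestr : ∀ j, restrF (E j) z = restrF (E j) x₀ + (σ * α) • indF (G j) := by
      intro j
      rw [hz, restr_add, hy, restr_smul, restr_indF]
    by_cases hcase : ∀ i ∈ E 0, N < i
    · -- Case A : all coordinates beyond N, x₀ part vanishes
      have hEbig : ∀ j < l, ∀ i ∈ E j, N < i := by
        intro j hj i hi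
        rcases Nat.eq_zero_or_pos j with rfl | hj0
        · exact hcase i hi
        · obtain ⟨c, hc⟩ := hne 0 (by omega)
          have h1 : N < c := hcase c hc
          have h2 : c < i := chain_lt' hne hlt 0 j hj0 hj c hc i hi
          omega
      have hx0r : ∀ j < l, restrF (E j) x₀ = 0 := by
        intro j hj
        ext i
        rw [restr_apply]
        split
        · exact hx0F i (hEbig j hj i ‹_›)
        · rfl
      have hzy : ∀ j ∈ Finset.range l, restrF (E j) z = restrF (E j) y := by
        intro j hj
        rw [Finset.mem_range] at hj
        rw [hz, restr_add, hx0r j hj, zero_add]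
      have : ∑ j ∈ Finset.range l, nrm (restrF (E j) z)
          = ∑ j ∈ Finset.range l, nrm (restrF (E j) y) :=
        Finset.sum_congr rfl fun j hj => by rw [hzy j hj]
      rw [this]
      have hbound := chain_sum_le h y hne hlt
      refine le_trans ?_ (le_max_left _ _)
      calc (1/2 : ℝ) * ∑ j ∈ Finset.range l, nrm (restrF (E j) y)
          ≤ (1/2) * ((m:ℝ) * α) := by
            have := le_trans hbound hl1y
            linarith
        _ = (m:ℝ) * α / 2 := by ring
    · -- Case B : min E 0 ≤ N, so l ≤ N
      push_neg at hcase
      obtain ⟨i₀, hi₀E, hi₀N⟩ := hcase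
      have hlN : l ≤ N := le_trans (hmin i₀ hi₀E) hi₀N
      -- split the sum
      have hsplit : ∀ j ∈ Finset.range l,
          nrm (restrF (E j) z) ≤ nrm (restrF (E j) x₀) + α * nrm (indF (G j)) := by
        intro j _
        rw [hrestr j]
        refine le_trans (h.1 _ _) ?_
        rw [h.2.1, habs]
      -- x₀ part is in the Tsirelson set of x₀
      have hx0part : (1/2 : ℝ) * ∑ j ∈ Finset.range l, nrm (restrF (E j) x₀) ≤ nrm x₀ :=
        tsirelson_elem_le h x₀ ⟨l, E, hl, hne, hlt, hmin, rfl⟩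
      -- y part
      have hGdisj : ∀ j₁ ∈ Finset.range l, ∀ j₂ ∈ Finset.range l, j₁ ≠ j₂ →
          Disjoint (G j₁) (G j₂) := by
        intro j₁ hj₁ j₂ hj₂ hne12
        rw [Finset.mem_range] at hj₁ hj₂
        apply Finset.disjoint_left.mpr
        intro a ha1 ha2
        rw [hG, Finset.mem_filter] at ha1 ha2
        exact Finset.disjoint_left.mp
          (chain_disjoint hne hlt j₁ j₂ hj₁ hj₂ hne12) ha1.2 ha2.2
      have hsumcard : ∑ j ∈ Finset.range l, (G j).card ≤ m := by
        rw [← Finset.card_biUnion hGdisj, ← hcardF]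
        apply Finset.card_le_card
        intro a ha
        rw [Finset.mem_biUnion] at ha
        obtain ⟨j, _, haj⟩ := ha
        rw [hG, Finset.mem_filter] at haj
        exact haj.1
      have hyterm : ∀ j ∈ Finset.range l,
          nrm (indF (G j)) ≤ (((G j).card : ℝ) + (if (G j).Nonempty then 1 else 0)) / 2 := by
        intro j _
        by_cases hGj : (G j).Nonempty
        · rw [if_pos hGj]
          refine le_trans (nrm_indF_le h (G j)) ?_
          have hc1 : (1:ℝ) ≤ ((G j).card : ℝ) := by
            exact_mod_cast Finset.card_pos.mpr hGj
          apply max_le <;> linarith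
        · rw [if_neg hGj]
          rw [Finset.not_nonempty_iff_eq_empty] at hGj
          rw [hGj]
          simp only [Finset.card_empty, Nat.cast_zero, add_zero]
          have hind : indF (∅ : Finset ℕ) = 0 := by rw [indF, Finset.sum_empty]
          rw [hind, nrm_zero h]
          norm_num
      have hypart : ∑ j ∈ Finset.range l, nrm (indF (G j)) ≤ ((m:ℝ) + N) / 2 := by
        refine le_trans (Finset.sum_le_sum hyterm) ?_
        have hc : (∑ j ∈ Finset.range l, ((G j).card : ℝ)) ≤ (m:ℝ) := by
          exact_mod_cast hsumcard
        have hi : (∑ j ∈ Finset.range l, (if (G j).Nonempty then (1:ℝ) else 0)) ≤ (N:ℝ) := by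
          calc (∑ j ∈ Finset.range l, (if (G j).Nonempty then (1:ℝ) else 0))
              ≤ ∑ _j ∈ Finset.range l, (1:ℝ) := by
                apply Finset.sum_le_sum
                intro j _
                split <;> norm_num
            _ = (l : ℝ) := by simp
            _ ≤ (N : ℝ) := by exact_mod_cast hlN
        calc ∑ j ∈ Finset.range l, (((G j).card : ℝ) + if (G j).Nonempty then (1:ℝ) else 0) / 2
            = ((∑ j ∈ Finset.range l, ((G j).card : ℝ))
              + ∑ j ∈ Finset.range l, (if (G j).Nonempty then (1:ℝ) else 0)) / 2 := by
              rw [← Finset.sum_add_distrib, ← Finset.sum_div]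
          _ ≤ ((m:ℝ) + N) / 2 := by linarith
      -- combine
      have hsum : ∑ j ∈ Finset.range l, nrm (restrF (E j) z)
          ≤ (∑ j ∈ Finset.range l, nrm (restrF (E j) x₀))
            + α * ∑ j ∈ Finset.range l, nrm (indF (G j)) := by
        rw [Finset.mul_sum, ← Finset.sum_add_distrib]
        exact Finset.sum_le_sum hsplit
      have hyp2 : α * ∑ j ∈ Finset.range l, nrm (indF (G j)) ≤ α * (((m:ℝ) + N) / 2) :=
        mul_le_mul_of_nonneg_left hypart hα.le
      refine le_max_of_le_right ?_
      have hNm : (N:ℝ) + m ≤ 2 * (N:ℝ) + m := by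
        have : (0:ℝ) ≤ N := Nat.cast_nonneg N
        linarith
      calc (1/2 : ℝ) * ∑ j ∈ Finset.range l, nrm (restrF (E j) z)
          ≤ (1/2) * ((∑ j ∈ Finset.range l, nrm (restrF (E j) x₀))
              + α * ∑ j ∈ Finset.range l, nrm (indF (G j))) := by linarith
        _ ≤ nrm x₀ + (1/2) * (α * (((m:ℝ) + N) / 2)) := by linarith
        _ = nrm x₀ + α * ((N:ℝ) + m) / 4 := by ring
        _ ≤ nrm x₀ + α * (2 * (N:ℝ) + m) / 4 := by
            have := mul_le_mul_of_nonneg_left hNm hα.le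
            linarith
  calc nrm z = max (supNormF z) (sSup (tsirelsonSet nrm z)) := h.2.2.2 z
    _ ≤ RHS := max_le hsupz (Real.sSup_le hsSup hRHS0)
end
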